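/- arXiv:1809.05015 — 10 statements merged into one kernel-verified Lean document; each statement's English description precedes it below -/
import Mathlib

section
/- Let G be a group, let K, N be natural numbers, and let 𝒳 be a nonempty family of K-approximate subgroups of G any two of which are N-commensurable. Then there exists a subset H ⊆ G such that H is an approximate subgroup (i.e. a K'-approximate subgroup for some K' ∈ ℕ), H is commensurable with every member of 𝒳 (i.e. for some N' ∈ ℕ, H is N'-commensurable with every X ∈ 𝒳), and H is invariant under every group automorphism φ of G that stabilizes 𝒳 set-wise (i.e. if {φ(X) : X ∈ 𝒳} = 𝒳 then φ(H) = H). -/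
open Pointwise

/-- `A` is a `K`-approximate subgroup of `G`. -/
def IsApproxSubgroup {G : Type*} [Group G] (K : ℕ) (A : Set G) : Prop :=
  (1 : G) ∈ A ∧ A = A⁻¹ ∧ ∃ F : Finset G, F.card ≤ K ∧ A * A ⊆ (F : Set G) * A

/-- `X` and `Y` are `N`-commensurable subsets of `G`. -/
def NComm {G : Type*} [Group G] (N : ℕ) (X Y : Set G) : Prop :=
  ∃ Z₀ Z₁ : Finset G, Z₀.card ≤ N ∧ Z₁.card ≤ N ∧
    X ⊆ (Z₀ : Set G) * Y ∧ Y ⊆ (Z₁ : Set G) * X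

open scoped Classical

namespace SchlichtingAux

variable {G : Type*} [Group G]

/-- `A` is covered by at most `n` left translates of `X`. -/
def ACov (n : ℕ) (A X : Set G) : Prop :=
  ∃ Z : Finset G, Z.card ≤ n ∧ A ⊆ (Z : Set G) * X

lemma ACov.mono_set {n : ℕ} {A A' X : Set G} (h : A' ⊆ A) (hA : ACov n A X) : ACov n A' X := by
  obtain ⟨Z, hZ, hsub⟩ := hA
  exact ⟨Z, hZ, h.trans hsub⟩

lemma ACov.mono_card {n m : ℕ} {A X : Set G} (h : n ≤ m) (hA : ACov n A X) : ACov m A X := by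
  obtain ⟨Z, hZ, hsub⟩ := hA
  exact ⟨Z, hZ.trans h, hsub⟩

lemma ACov.trans {m n : ℕ} {A B C : Set G} (h1 : ACov m A B) (h2 : ACov n B C) :
    ACov (m * n) A C := by
  obtain ⟨Z, hZ, hZs⟩ := h1
  obtain ⟨W, hW, hWs⟩ := h2
  refine ⟨Z * W, Finset.card_mul_le.trans (Nat.mul_le_mul hZ hW), ?_⟩
  calc A ⊆ (Z : Set G) * B := hZs
    _ ⊆ (Z : Set G) * ((W : Set G) * C) := Set.mul_subset_mul_left hWs
    _ = ((Z * W : Finset G) : Set G) * C := by rw [Finset.coe_mul, mul_assoc]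

lemma acov_pow {K : ℕ} {X : Set G} (h1 : (1:G) ∈ X) (hK : ACov K (X * X) X) :
    ∀ n : ℕ, ACov (K ^ n) (X ^ (n + 1)) X := by
  intro n
  induction n with
  | zero =>
    refine ⟨{1}, by simp, ?_⟩
    simp only [pow_one, Finset.coe_singleton, Set.singleton_mul, Set.image_mul_left]
    intro x hx; simpa using hx
  | succ n ih =>
    obtain ⟨Z, hZ, hZs⟩ := ih
    obtain ⟨F, hF, hFs⟩ := hK
    refine ⟨Z * F, Finset.card_mul_le.trans ?_, ?_⟩
    · rw [pow_succ]; exact Nat.mul_le_mul hZ hF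
    · calc X ^ (n + 2) = X ^ (n + 1) * X := pow_succ X (n+1)
        _ ⊆ ((Z : Set G) * X) * X := Set.mul_subset_mul_right hZs
        _ = (Z : Set G) * (X * X) := mul_assoc _ _ _
        _ ⊆ (Z : Set G) * ((F : Set G) * X) := Set.mul_subset_mul_left hFs
        _ = ((Z * F : Finset G) : Set G) * X := by rw [Finset.coe_mul, mul_assoc]

/-- Pigeonhole: a left-separated finite subset of a covered set is small. -/
lemma sep_card_le {n : ℕ} {A X : Set G} (hA : ACov n A X) (T : Finset G)
    (hT : (T : Set G) ⊆ A) (hsep : ∀ a ∈ T, ∀ b ∈ T, a ≠ b → a⁻¹ * b ∉ X⁻¹ * X) :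
    T.card ≤ n := by
  obtain ⟨Z, hZ, hZs⟩ := hA
  have hchoice : ∀ a ∈ T, ∃ z ∈ Z, ∃ x ∈ X, z * x = a := by
    intro a ha
    obtain ⟨z, hz, x, hx, hzx⟩ := hZs (hT ha)
    exact ⟨z, by exact_mod_cast hz, x, hx, hzx⟩
  set f : G → G := fun a => if h : a ∈ T then (hchoice a h).choose else 1 with hf
  have hfZ : ∀ a ∈ T, f a ∈ Z ∧ ∃ x ∈ X, f a * x = a := by
    intro a ha
    simp only [hf, dif_pos ha]
    exact ⟨(hchoice a ha).choose_spec.1, (hchoice a ha).choose_spec.2⟩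
  have : T.card ≤ Z.card := by
    apply Finset.card_le_card_of_injOn f (fun a ha => (hfZ a ha).1)
    intro a ha b hb hab
    by_contra hne
    apply hsep a (by exact_mod_cast ha) b (by exact_mod_cast hb) hne
    obtain ⟨x, hx, hxa⟩ := (hfZ a (by exact_mod_cast ha)).2
    obtain ⟨y, hy, hyb⟩ := (hfZ b (by exact_mod_cast hb)).2
    have : a⁻¹ * b = x⁻¹ * y := by
      rw [← hxa, ← hyb, hab]; group
    rw [this]
    exact Set.mul_mem_mul (Set.inv_mem_inv.mpr hx) hy
  exact this.trans hZ

/-- Right-handed pigeonhole. -/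
lemma sepR_card_le {A X : Set G} {Z : Finset G} (hA : A ⊆ X * (Z : Set G)) (T : Finset G)
    (hT : (T : Set G) ⊆ A) (hsep : ∀ a ∈ T, ∀ b ∈ T, a ≠ b → a * b⁻¹ ∉ X * X⁻¹) :
    T.card ≤ Z.card := by
  have hchoice : ∀ a ∈ T, ∃ z ∈ Z, ∃ x ∈ X, x * z = a := by
    intro a ha
    obtain ⟨x, hx, z, hz, hzx⟩ := hA (hT ha)
    exact ⟨z, by exact_mod_cast hz, x, hx, hzx⟩
  set f : G → G := fun a => if h : a ∈ T then (hchoice a h).choose else 1 with hf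
  have hfZ : ∀ a ∈ T, f a ∈ Z ∧ ∃ x ∈ X, x * f a = a := by
    intro a ha
    simp only [hf, dif_pos ha]
    exact ⟨(hchoice a ha).choose_spec.1, (hchoice a ha).choose_spec.2⟩
  apply Finset.card_le_card_of_injOn f (fun a ha => (hfZ a (by exact_mod_cast ha)).1)
  intro a ha b hb hab
  by_contra hne
  apply hsep a (by exact_mod_cast ha) b (by exact_mod_cast hb) hne
  obtain ⟨x, hx, hxa⟩ := (hfZ a (by exact_mod_cast ha)).2
  obtain ⟨y, hy, hyb⟩ := (hfZ b (by exact_mod_cast hb)).2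
  have : a * b⁻¹ = x * y⁻¹ := by
    rw [← hxa, ← hyb, hab]; group
  rw [this]
  exact Set.mul_mem_mul hx (Set.inv_mem_inv.mpr hy)

/-- Pieces version of the simultaneous covering lemma. -/
lemma cells_pieces (n : ℕ) (A : Set G) :
    ∀ s : Finset (Set G),
      (∀ Y ∈ s, ∃ Z : Finset G, Z.card ≤ n ∧ A ⊆ (Z : Set G) * Y) →
      ∃ Ps : Finset (Set G), Ps.card ≤ n ^ s.card ∧ A ⊆ ⋃₀ ↑Ps ∧
        ∀ p ∈ Ps, p ⊆ A ∧ ∀ a ∈ p, ∀ b ∈ p, ∀ Y ∈ s, a⁻¹ * b ∈ Y⁻¹ * Y := by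
  intro s
  induction s using Finset.induction_on with
  | empty =>
    intro _
    refine ⟨{A}, by simp, by simp, ?_⟩
    simp
  | @insert Y t hYt ih =>
    intro hcov
    obtain ⟨Ps, hPscard, hPscover, hPsprop⟩ := ih (fun Y' hY' => hcov Y' (Finset.mem_insert_of_mem hY'))
    obtain ⟨Z, hZcard, hZcover⟩ := hcov Y (Finset.mem_insert_self Y t)
    refine ⟨Finset.image₂ (fun p z => p ∩ ({z} * Y)) Ps Z, ?_, ?_, ?_⟩
    · calc (Finset.image₂ _ Ps Z).card ≤ Ps.card * Z.card := Finset.card_image₂_le _ _ _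
        _ ≤ n ^ t.card * n := Nat.mul_le_mul hPscard hZcard
        _ = n ^ (insert Y t).card := by
            rw [Finset.card_insert_of_notMem hYt, pow_succ]
    · intro a ha
      obtain ⟨p, hp, hap⟩ := by simpa using hPscover ha
      obtain ⟨z, hz, y, hy, hzy⟩ := hZcover ha
      refine Set.mem_sUnion.mpr ⟨p ∩ ({z} * Y), ?_, hap, ?_⟩
      · exact_mod_cast Finset.mem_coe.mpr (Finset.mem_image₂.mpr ⟨p, hp, z, by exact_mod_cast hz, rfl⟩)
      · exact ⟨z, rfl, y, hy, hzy⟩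
    · intro q hq
      obtain ⟨p, hp, z, hz, rfl⟩ := Finset.mem_image₂.mp hq
      constructor
      · exact fun a ha => (hPsprop p hp).1 ha.1
      · intro a ha b hb Y' hY'
        rcases Finset.mem_insert.mp hY' with h | h
        · subst h
          obtain ⟨z1, hz1, x, hx, hzx⟩ := ha.2
          obtain ⟨z2, hz2, y, hy, hzy⟩ := hb.2
          simp only [Set.mem_singleton_iff] at hz1 hz2
          subst hz1; subst hz2
          have : a⁻¹ * b = x⁻¹ * y := by rw [← hzx, ← hzy]; group
          rw [this]
          exact Set.mul_mem_mul (Set.inv_mem_inv.mpr hx) hy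
        · exact (hPsprop p hp).2 a ha.1 b hb.1 Y' h

/-- Simultaneous covering lemma. -/
lemma cells (n : ℕ) (A : Set G) (s : Finset (Set G))
    (hcov : ∀ Y ∈ s, ∃ Z : Finset G, Z.card ≤ n ∧ A ⊆ (Z : Set G) * Y) :
    ∃ R : Finset G, R.card ≤ n ^ s.card ∧ A ⊆ (R : Set G) * ⋂ Y ∈ s, Y⁻¹ * Y := by
  obtain ⟨Ps, hPscard, hPscover, hPsprop⟩ := cells_pieces n A s hcov
  set f : Set G → G := fun p => if h : p.Nonempty then h.choose else 1 with hf
  refine ⟨Ps.image f, (Finset.card_image_le).trans hPscard, ?_⟩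
  intro a ha
  obtain ⟨p, hpPs, hap⟩ := Set.mem_sUnion.mp (hPscover ha)
  have hpPs' : p ∈ Ps := by exact_mod_cast hpPs
  have hpne : p.Nonempty := ⟨a, hap⟩
  have hr : f p ∈ p := by rw [hf]; simp only [dif_pos hpne]; exact hpne.choose_spec
  refine ⟨f p, ?_, (f p)⁻¹ * a, ?_, by group⟩
  · exact_mod_cast Finset.mem_image_of_mem f hpPs'
  · simp only [Set.mem_iInter]
    intro Y hY
    exact (hPsprop p hpPs').2 (f p) hr a hap Y hY

/-- Basic intersections: finite nonempty intersections of squares of members of `𝒳`. -/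
def IsPB (𝒳 : Set (Set G)) (B : Set G) : Prop :=
  ∃ s : Finset (Set G), (s : Set (Set G)) ⊆ 𝒳 ∧ s.Nonempty ∧ B = ⋂ Y ∈ s, Y * Y

/-- Every finite subset of `B` that is separated with respect to some square of a member
has at most `n` elements. -/
def GoodS (𝒳 : Set (Set G)) (n : ℕ) (B : Set G) : Prop :=
  ∀ X ∈ 𝒳, ∀ T : Finset G, (T : Set G) ⊆ B →
    (∀ a ∈ T, ∀ b ∈ T, a ≠ b → a⁻¹ * b ∉ X * X) → T.card ≤ n

/-- The candidate invariant approximate subgroup. -/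
def SchU (𝒳 : Set (Set G)) (d : ℕ) : Set G :=
  ⋃₀ {B | IsPB 𝒳 B ∧ GoodS 𝒳 d B}

lemma GoodS.mono {𝒳 : Set (Set G)} {n : ℕ} {B B' : Set G} (h : B' ⊆ B)
    (hB : GoodS 𝒳 n B) : GoodS 𝒳 n B' :=
  fun X hX T hT hsep => hB X hX T (hT.trans h) hsep

lemma one_mem_of_isPB {𝒳 : Set (Set G)} {B : Set G} (hmem1 : ∀ X ∈ 𝒳, (1:G) ∈ X)
    (hB : IsPB 𝒳 B) : (1:G) ∈ B := by
  obtain ⟨s, hs, -, rfl⟩ := hB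
  simp only [Set.mem_iInter]
  intro Y hY
  simpa using Set.mul_mem_mul (hmem1 Y (hs hY)) (hmem1 Y (hs hY))

lemma inv_mem_of_isPB {𝒳 : Set (Set G)} {B : Set G} (hsymm : ∀ X ∈ 𝒳, X⁻¹ = X)
    (hB : IsPB 𝒳 B) {b : G} (hb : b ∈ B) : b⁻¹ ∈ B := by
  obtain ⟨s, hs, -, rfl⟩ := hB
  simp only [Set.mem_iInter] at hb ⊢
  intro Y hY
  obtain ⟨y1, hy1, y2, hy2, hyy⟩ := hb Y hY
  have h1 : y2⁻¹ ∈ Y := by rw [← hsymm Y (hs hY)]; exact Set.inv_mem_inv.mpr hy2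
  have h2 : y1⁻¹ ∈ Y := by rw [← hsymm Y (hs hY)]; exact Set.inv_mem_inv.mpr hy1
  have : b⁻¹ = y2⁻¹ * y1⁻¹ := by rw [← hyy]; group
  rw [this]
  exact Set.mul_mem_mul h1 h2

lemma exists_member_sq_superset {𝒳 : Set (Set G)} {B : Set G} (hB : IsPB 𝒳 B) :
    ∃ X₁ ∈ 𝒳, B ⊆ X₁ * X₁ := by
  obtain ⟨s, hs, ⟨X₁, hX₁⟩, rfl⟩ := hB
  refine ⟨X₁, hs hX₁, ?_⟩
  intro x hx
  simp only [Set.mem_iInter] at hx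
  exact hx X₁ hX₁

/-- A `IsPB` set is `(K*N)`-covered by every member. -/
lemma acov_of_isPB {𝒳 : Set (Set G)} {K N : ℕ} {B : Set G}
    (hpow : ∀ X ∈ 𝒳, ∀ n : ℕ, ACov (K ^ n) (X ^ (n+1)) X)
    (hcv : ∀ X ∈ 𝒳, ∀ Y ∈ 𝒳, ACov N X Y)
    (hB : IsPB 𝒳 B) : ∀ X ∈ 𝒳, ACov (K * N) B X := by
  intro X hX
  obtain ⟨X₁, hX₁, hsub⟩ := exists_member_sq_superset hB
  have h1 : ACov K (X₁ * X₁) X₁ := by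
    have := hpow X₁ hX₁ 1
    simpa [pow_one, sq] using this
  have h2 := ACov.trans h1 (hcv X₁ hX₁ X hX)
  exact h2.mono_set hsub


/-- Core lemma: any finite subset of `SchU 𝒳 d` lies in `X₀² * X'²` for some member `X'`. -/
lemma core_lemma {𝒳 : Set (Set G)} {d : ℕ} (X₀ : Set G) (hX₀ : X₀ ∈ 𝒳)
    (hmem1 : ∀ X ∈ 𝒳, (1:G) ∈ X) (hsymm : ∀ X ∈ 𝒳, X⁻¹ = X)
    (hd1 : 1 ≤ d)
    (hdmin : ∀ B, IsPB 𝒳 B → ¬ GoodS 𝒳 (d-1) B)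
    (T : Finset G) (hTU : (T : Set G) ⊆ SchU 𝒳 d) :
    ∃ X' ∈ 𝒳, (T : Set G) ⊆ (X₀ * X₀) * (X' * X') := by
  rcases T.eq_empty_or_nonempty with rfl | hTne
  · exact ⟨X₀, hX₀, by simp⟩
  have h1sq : ∀ X ∈ 𝒳, (1:G) ∈ X * X := by
    intro X hX
    simpa using Set.mul_mem_mul (hmem1 X hX) (hmem1 X hX)
  have hsrc : ∀ u ∈ T, ∃ s : Finset (Set G), ((s : Set (Set G)) ⊆ 𝒳 ∧ s.Nonempty) ∧
      (GoodS 𝒳 d (⋂ Y ∈ s, Y * Y) ∧ u ∈ ⋂ Y ∈ s, Y * Y) := by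
    intro u hu
    obtain ⟨B, ⟨hBisP, hBgood⟩, huB⟩ := Set.mem_sUnion.mp (hTU (Finset.mem_coe.mpr hu))
    obtain ⟨s, hs1, hs2, rfl⟩ := hBisP
    exact ⟨s, ⟨hs1, hs2⟩, hBgood, huB⟩
  choose! su hsu1 hsu2 using hsrc
  set sC : Finset (Set G) := insert X₀ (T.biUnion su) with hsC
  set C : Set G := ⋂ Y ∈ sC, Y * Y with hC
  have hsC𝒳 : (sC : Set (Set G)) ⊆ 𝒳 := by
    intro Y hY
    rw [Finset.mem_coe, hsC, Finset.mem_insert] at hY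
    rcases hY with rfl | hY
    · exact hX₀
    · obtain ⟨u, hu, hYu⟩ := Finset.mem_biUnion.mp hY
      exact (hsu1 u hu).1 (Finset.mem_coe.mpr hYu)
  have hCisP : IsPB 𝒳 C := ⟨sC, hsC𝒳, ⟨X₀, Finset.mem_insert_self _ _⟩, rfl⟩
  have hCsub : ∀ u ∈ T, C ⊆ ⋂ Y ∈ su u, Y * Y := by
    intro u hu x hx
    simp only [hC, Set.mem_iInter] at hx ⊢
    intro Y hY
    exact hx Y (Finset.mem_insert_of_mem (Finset.mem_biUnion.mpr ⟨u, hu, hY⟩))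
  have hCX₀ : C ⊆ X₀ * X₀ := by
    intro x hx
    simp only [hC, Set.mem_iInter] at hx
    exact hx X₀ (Finset.mem_insert_self _ _)
  have hCnotgood : ¬ GoodS 𝒳 (d-1) C := hdmin C hCisP
  simp only [GoodS] at hCnotgood
  push_neg at hCnotgood
  obtain ⟨X', hX', S, hSC, hSsep, hScard⟩ := hCnotgood
  have hdS : d ≤ S.card := by omega
  have hXs : (X' * X')⁻¹ = X' * X' := by rw [mul_inv_rev, hsymm X' hX']
  refine ⟨X', hX', ?_⟩
  intro u hu
  have huT : u ∈ T := Finset.mem_coe.mp hu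
  have hfind : ∃ sS ∈ S, sS⁻¹ * u ∈ X' * X' := by
    by_contra hno
    push_neg at hno
    have hnotS : u ∉ S := by
      intro huS
      exact hno u huS (by rw [inv_mul_cancel]; exact h1sq X' hX')
    have hgood := (hsu2 u huT).1
    have hTsub : ((insert u S : Finset G) : Set G) ⊆ ⋂ Y ∈ su u, Y * Y := by
      intro x hx
      rw [Finset.coe_insert, Set.mem_insert_iff] at hx
      rcases hx with hxu | hx
      · rw [hxu]; exact (hsu2 u huT).2
      · exact hCsub u huT (hSC hx)
    have hsep' : ∀ a ∈ insert u S, ∀ b ∈ insert u S, a ≠ b → a⁻¹ * b ∉ X' * X' := by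
      intro a ha b hb hab
      rcases Finset.mem_insert.mp ha with rfl | haS
      · rcases Finset.mem_insert.mp hb with rfl | hbS
        · exact absurd rfl hab
        · intro hmem
          apply hno b hbS
          have heq : b⁻¹ * a = (a⁻¹ * b)⁻¹ := by group
          rw [heq, ← hXs]
          exact Set.inv_mem_inv.mpr hmem
      · rcases Finset.mem_insert.mp hb with rfl | hbS
        · exact hno a haS
        · exact hSsep a haS b hbS hab
    have hcard := hgood X' hX' (insert u S) hTsub hsep'
    rw [Finset.card_insert_of_notMem hnotS] at hcard
    omega
  obtain ⟨sS, hsS, hmem⟩ := hfind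
  have huEq : u = sS * (sS⁻¹ * u) := by group
  rw [huEq]
  exact Set.mul_mem_mul (hCX₀ (hSC hsS)) hmem

lemma one_mem_pow' {X : Set G} (h : (1:G) ∈ X) : ∀ n : ℕ, (1:G) ∈ X ^ (n+1) := by
  intro n
  induction n with
  | zero => simpa using h
  | succ n ih => rw [pow_succ]; exact mul_one (1:G) ▸ Set.mul_mem_mul ih h

lemma cover_lemma {𝒳 : Set (Set G)} {K N d : ℕ} (X₀ : Set G) (hX₀ : X₀ ∈ 𝒳)
    (hmem1 : ∀ X ∈ 𝒳, (1:G) ∈ X) (hsymm : ∀ X ∈ 𝒳, X⁻¹ = X)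
    (hd1 : 1 ≤ d)
    (hdmin : ∀ B, IsPB 𝒳 B → ¬ GoodS 𝒳 (d-1) B)
    (hpow : ∀ X ∈ 𝒳, ∀ n : ℕ, ACov (K ^ n) (X ^ (n+1)) X)
    (hcv : ∀ X ∈ 𝒳, ∀ Y ∈ 𝒳, ACov N X Y) :
    ∃ T₀ : Finset G, T₀.card ≤ K * N ∧ (T₀ : Set G) ⊆ SchU 𝒳 d ∧
      SchU 𝒳 d ⊆ X₀ ^ 6 * (T₀ : Set G) := by
  have h6 : (X₀ ^ 6)⁻¹ = X₀ ^ 6 := by rw [← inv_pow, hsymm X₀ hX₀]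
  have h3 : (X₀ ^ 3)⁻¹ = X₀ ^ 3 := by rw [← inv_pow, hsymm X₀ hX₀]
  have hone6 : (1:G) ∈ X₀ ^ 6 := one_mem_pow' (hmem1 X₀ hX₀) 5
  -- Step 1: every right-separated finite subset of SchU has at most K*N elements.
  have hbound : ∀ T : Finset G, (T : Set G) ⊆ SchU 𝒳 d →
      (∀ a ∈ T, ∀ b ∈ T, a ≠ b → a * b⁻¹ ∉ X₀ ^ 6) → T.card ≤ K * N := by
    intro T hTU hsep
    obtain ⟨X', hX', hTsub⟩ := core_lemma X₀ hX₀ hmem1 hsymm hd1 hdmin T hTU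
    have hcov2 : ACov (K * N) (X' * X') X₀ := by
      have h1 : ACov K (X' * X') X' := by simpa [pow_one, sq] using hpow X' hX' 1
      exact h1.trans (hcv X' hX' X₀ hX₀)
    obtain ⟨Z, hZcard, hZsub⟩ := hcov2
    have hXsym : (X' * X')⁻¹ = X' * X' := by rw [mul_inv_rev, hsymm X' hX']
    have hright : X' * X' ⊆ X₀ * ((Z⁻¹ : Finset G) : Set G) := by
      intro x hx
      have hxi : x⁻¹ ∈ X' * X' := by rw [← hXsym]; exact Set.inv_mem_inv.mpr hx
      obtain ⟨z, hz, y, hy, hzy⟩ := hZsub hxi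
      refine ⟨y⁻¹, ?_, z⁻¹, ?_, ?_⟩
      · rw [← hsymm X₀ hX₀]; exact Set.inv_mem_inv.mpr hy
      · rw [Finset.coe_inv]; exact Set.inv_mem_inv.mpr hz
      · have hzy' : z * y = x⁻¹ := hzy
        have : x = (z * y)⁻¹ := by rw [hzy']; group
        rw [this]; group
    have hT3 : (T : Set G) ⊆ (X₀ ^ 3) * ((Z⁻¹ : Finset G) : Set G) := by
      intro x hx
      have h1 := hTsub hx
      have h2 : (X₀ * X₀) * (X' * X') ⊆ (X₀ * X₀) * (X₀ * ((Z⁻¹ : Finset G) : Set G)) :=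
        Set.mul_subset_mul_left hright
      have h3' : (X₀ * X₀) * (X₀ * ((Z⁻¹ : Finset G) : Set G)) =
          (X₀ ^ 3) * ((Z⁻¹ : Finset G) : Set G) := by
        rw [show (X₀:Set G) ^ 3 = X₀ * X₀ * X₀ from by rw [pow_succ, sq]]
        simp only [mul_assoc]
      rw [← h3']
      exact h2 h1
    have hsep3 : ∀ a ∈ T, ∀ b ∈ T, a ≠ b → a * b⁻¹ ∉ (X₀ ^ 3) * (X₀ ^ 3)⁻¹ := by
      intro a ha b hb hab
      rw [h3, show (X₀:Set G) ^ 3 * X₀ ^ 3 = X₀ ^ 6 from by rw [← pow_add]]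
      exact hsep a ha b hb hab
    have := sepR_card_le hT3 T (by exact fun x hx => hx) hsep3
    rw [Finset.card_inv] at this
    exact this.trans hZcard
  -- Step 2: take a maximal right-separated subset.
  set Psep : ℕ → Prop := fun n => ∃ T : Finset G, ((T : Set G) ⊆ SchU 𝒳 d ∧
      (∀ a ∈ T, ∀ b ∈ T, a ≠ b → a * b⁻¹ ∉ X₀ ^ 6)) ∧ T.card = n with hPsep
  have hP0 : Psep 0 := ⟨∅, ⟨by simp, by simp⟩, rfl⟩
  have hn₀ : Psep (Nat.findGreatest Psep (K*N)) := Nat.findGreatest_spec (Nat.zero_le (K*N)) hP0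
  obtain ⟨T₀, ⟨hT₀U, hT₀sep⟩, hT₀card⟩ := hn₀
  refine ⟨T₀, ?_, hT₀U, ?_⟩
  · rw [hT₀card]; exact Nat.findGreatest_le (K*N)
  · intro u hu
    by_cases hcase : ∃ v ∈ T₀, u * v⁻¹ ∈ X₀ ^ 6 ∨ v * u⁻¹ ∈ X₀ ^ 6
    · obtain ⟨v, hv, hcase⟩ := hcase
      have huv : u * v⁻¹ ∈ X₀ ^ 6 := by
        rcases hcase with h | h
        · exact h
        · have heq : u * v⁻¹ = (v * u⁻¹)⁻¹ := by group
          rw [heq, ← h6]; exact Set.inv_mem_inv.mpr h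
      exact ⟨u * v⁻¹, huv, v, Finset.mem_coe.mpr hv, by group⟩
    · exfalso
      push_neg at hcase
      have huT₀ : u ∉ T₀ := by
        intro huT
        exact (hcase u huT).1 (by rw [mul_inv_cancel]; exact hone6)
      have hCsub : ((insert u T₀ : Finset G) : Set G) ⊆ SchU 𝒳 d := by
        rw [Finset.coe_insert]
        intro x hx
        rcases hx with hxu | hx
        · rw [hxu]; exact hu
        · exact hT₀U hx
      have hsep' : ∀ a ∈ insert u T₀, ∀ b ∈ insert u T₀, a ≠ b → a * b⁻¹ ∉ X₀ ^ 6 := by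
        intro a ha b hb hab
        rcases Finset.mem_insert.mp ha with rfl | haT
        · rcases Finset.mem_insert.mp hb with rfl | hbT
          · exact absurd rfl hab
          · exact (hcase b hbT).1
        · rcases Finset.mem_insert.mp hb with rfl | hbT
          · exact (hcase a haT).2
          · exact hT₀sep a haT b hbT hab
      have hle := hbound (insert u T₀) hCsub hsep'
      rw [Finset.card_insert_of_notMem huT₀, hT₀card] at hle
      have hgt : Psep (Nat.findGreatest Psep (K*N) + 1) := by
        refine ⟨insert u T₀, ⟨hCsub, hsep'⟩, ?_⟩
        rw [Finset.card_insert_of_notMem huT₀, hT₀card]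
      exact Nat.findGreatest_is_greatest (Nat.lt_succ_self _) (by omega) hgt

lemma conj_lemma {𝒳 : Set (Set G)} {K N d : ℕ} (X₀ : Set G) (hX₀ : X₀ ∈ 𝒳)
    (hsymm : ∀ X ∈ 𝒳, X⁻¹ = X)
    (hpow : ∀ X ∈ 𝒳, ∀ n : ℕ, ACov (K ^ n) (X ^ (n+1)) X)
    (hcv : ∀ X ∈ 𝒳, ∀ Y ∈ 𝒳, ACov N X Y)
    {v : G} (hv : v ∈ SchU 𝒳 d) :
    ∃ R : Finset G, ∀ p ∈ (X₀:Set G) ^ 12, v⁻¹ * p * v ∈ (R : Set G) * X₀ := by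
  obtain ⟨B, ⟨hBisP, hBgood⟩, hvB⟩ := Set.mem_sUnion.mp hv
  obtain ⟨s, hs𝒳, hsne, hBeq⟩ := hBisP
  obtain ⟨X₁, hX₁𝒳, hBX₁⟩ := exists_member_sq_superset ⟨s, hs𝒳, hsne, hBeq⟩
  have hc12 : ∀ Y ∈ s, ∃ Z : Finset G, Z.card ≤ K^11 * N ∧ (X₀:Set G)^12 ⊆ (Z:Set G) * Y := by
    intro Y hY
    exact (hpow X₀ hX₀ 11).trans (hcv X₀ hX₀ Y (hs𝒳 hY))
  obtain ⟨S, hScard, hSsub⟩ := cells (K^11 * N) ((X₀:Set G)^12) s hc12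
  have hIsub : (⋂ Y ∈ s, Y⁻¹ * Y) ⊆ B := by
    rw [hBeq]
    intro x hx
    simp only [Set.mem_iInter] at hx ⊢
    intro Y hY
    have := hx Y hY
    rwa [hsymm Y (hs𝒳 hY)] at this
  obtain ⟨Q, hQcard, hQsub⟩ : ACov (K^5 * N) ((X₁:Set G)^6) X₀ :=
    (hpow X₁ hX₁𝒳 5).trans (hcv X₁ hX₁𝒳 X₀ hX₀)
  have hvB' : v⁻¹ ∈ B := inv_mem_of_isPB hsymm ⟨s, hs𝒳, hsne, hBeq⟩ hvB
  have hBBB : B * (B * B) ⊆ (X₁:Set G) ^ 6 := by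
    have h := Set.mul_subset_mul hBX₁ (Set.mul_subset_mul hBX₁ hBX₁)
    have heq : (X₁:Set G) * X₁ * (X₁ * X₁ * (X₁ * X₁)) = X₁ ^ 6 := by
      rw [← sq, ← pow_add, ← pow_add]
    rw [← heq]
    exact h
  refine ⟨Finset.image₂ (fun st q => v⁻¹ * st * v * q) S Q, ?_⟩
  intro p hp
  obtain ⟨st, hst, a, ha, hsta⟩ := hSsub hp
  have hstS : st ∈ S := by exact_mod_cast hst
  have haB : a ∈ B := hIsub ha
  have h1 : v⁻¹ * (a * v) ∈ B * (B * B) :=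
    Set.mul_mem_mul hvB' (Set.mul_mem_mul haB hvB)
  obtain ⟨q, hq, x₀, hx₀, hqx⟩ := hQsub (hBBB h1)
  have hqQ : q ∈ Q := by exact_mod_cast hq
  refine ⟨v⁻¹ * st * v * q, ?_, x₀, hx₀, ?_⟩
  · exact_mod_cast Finset.mem_coe.mpr
      (Finset.mem_image₂.mpr ⟨st, hstS, q, hqQ, rfl⟩)
  · have hqx' : q * x₀ = v⁻¹ * (a * v) := hqx
    have hsta' : st * a = p := hsta
    calc v⁻¹ * st * v * q * x₀ = (v⁻¹ * st * v) * (q * x₀) := by group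
      _ = (v⁻¹ * st * v) * (v⁻¹ * (a * v)) := by rw [hqx']
      _ = v⁻¹ * (st * a) * v := by group
      _ = v⁻¹ * p * v := by rw [hsta']

lemma cocover_lemma {𝒳 : Set (Set G)} {N : ℕ}
    (hsymm : ∀ X ∈ 𝒳, X⁻¹ = X)
    (hcv : ∀ X ∈ 𝒳, ∀ Y ∈ 𝒳, ACov N X Y)
    (s : Finset (Set G)) (hs : (s : Set (Set G)) ⊆ 𝒳)
    {X : Set G} (hX : X ∈ 𝒳) :
    ∃ S : Finset G, S.card ≤ N ^ s.card ∧ X ⊆ (S : Set G) * ⋂ Y ∈ s, Y * Y := by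
  obtain ⟨R, hRcard, hRsub⟩ := cells N X s (fun Y hY => hcv X hX Y (hs (Finset.mem_coe.mpr hY)))
  refine ⟨R, hRcard, hRsub.trans (Set.mul_subset_mul_left ?_)⟩
  intro x hx
  simp only [Set.mem_iInter] at hx ⊢
  intro Y hY
  have := hx Y hY
  rwa [hsymm Y (hs (Finset.mem_coe.mpr hY))] at this

lemma schU_image_subset {𝒳 : Set (Set G)} {d : ℕ} (φ : G ≃* G)
    (hφ : ∀ X ∈ 𝒳, (φ : G → G) '' X ∈ 𝒳)
    (hφ' : ∀ X ∈ 𝒳, (φ.symm : G → G) '' X ∈ 𝒳) :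
    (φ : G → G) '' SchU 𝒳 d ⊆ SchU 𝒳 d := by
  rintro _ ⟨u, hu, rfl⟩
  obtain ⟨B, ⟨⟨s, hs𝒳, hsne, hBeq⟩, hBgood⟩, huB⟩ := Set.mem_sUnion.mp hu
  subst hBeq
  have himg : ∀ Y : Set G, (φ : G → G) '' (Y * Y) = ((φ : G → G) '' Y) * ((φ : G → G) '' Y) :=
    fun Y => Set.image_mul φ.toMonoidHom
  refine Set.mem_sUnion.mpr
    ⟨(φ : G → G) '' ⋂ Y ∈ s, Y * Y,
     ⟨⟨s.image (fun Y => (φ : G → G) '' Y), ?_, hsne.image _, ?_⟩, ?_⟩, ⟨u, huB, rfl⟩⟩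
  · intro Y hY
    obtain ⟨Y₀, hY₀, rfl⟩ := Finset.mem_image.mp (by exact_mod_cast hY)
    exact hφ Y₀ (hs𝒳 (Finset.mem_coe.mpr hY₀))
  · calc (φ : G → G) '' ⋂ Y ∈ s, Y * Y
        = ⋂ Y ∈ s, (φ : G → G) '' (Y * Y) := Set.image_iInter₂ φ.toEquiv.bijective _
      _ = ⋂ Y ∈ s.image (fun Y => (φ : G → G) '' Y), Y * Y := by
          ext x
          simp only [Set.mem_iInter, Finset.mem_image]
          constructor
          · rintro h Y ⟨Y₀, hY₀, rfl⟩
            rw [← himg Y₀]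
            exact h Y₀ hY₀
          · intro h Y hY
            rw [himg Y]
            exact h _ ⟨Y, hY, rfl⟩
  · -- GoodS for the image
    intro X hX T hTsub hTsep
    have hX' : (φ.symm : G → G) '' X ∈ 𝒳 := hφ' X hX
    have hcard : (T.image (φ.symm : G → G)).card = T.card :=
      Finset.card_image_of_injective _ φ.symm.injective
    have hsub' : ((T.image (φ.symm : G → G) : Finset G) : Set G) ⊆ ⋂ Y ∈ s, Y * Y := by
      intro x hx
      obtain ⟨t, ht, rfl⟩ := Finset.mem_image.mp (by exact_mod_cast hx)
      obtain ⟨y, hy, hyt⟩ := hTsub (Finset.mem_coe.mpr ht)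
      rw [← hyt]
      simpa using hy
    have hsep' : ∀ a ∈ T.image (φ.symm : G → G), ∀ b ∈ T.image (φ.symm : G → G), a ≠ b →
        a⁻¹ * b ∉ ((φ.symm : G → G) '' X) * ((φ.symm : G → G) '' X) := by
      intro a ha b hb hab hmem
      obtain ⟨a₀, ha₀, rfl⟩ := Finset.mem_image.mp ha
      obtain ⟨b₀, hb₀, rfl⟩ := Finset.mem_image.mp hb
      have hne : a₀ ≠ b₀ := fun h => hab (by rw [h])
      apply hTsep a₀ ha₀ b₀ hb₀ hne
      have heq : (φ.symm a₀)⁻¹ * (φ.symm b₀) = φ.symm (a₀⁻¹ * b₀) := by simp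
      rw [heq, show (⇑φ.symm '' X) * (⇑φ.symm '' X) = ⇑φ.symm '' (X * X) from (Set.image_mul (φ.symm : G ≃* G)).symm] at hmem
      obtain ⟨w, hw, hweq⟩ := hmem
      have : w = a₀⁻¹ * b₀ := φ.symm.injective hweq
      rwa [← this]
    have := hBgood _ hX' _ hsub' hsep'
    omega

end SchlichtingAux

open SchlichtingAux

/-- **Schlichting's theorem for approximate subgroups.** -/
theorem schlichting_for_approximate_subgroups
    {G : Type*} [Group G] (K N : ℕ) (𝒳 : Set (Set G)) (hne : 𝒳.Nonempty)
    (happrox : ∀ X ∈ 𝒳, IsApproxSubgroup K X)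
    (hcomm : ∀ X ∈ 𝒳, ∀ Y ∈ 𝒳, NComm N X Y) :
    ∃ H : Set G,
      (∃ K' : ℕ, IsApproxSubgroup K' H) ∧
      (∃ N' : ℕ, ∀ X ∈ 𝒳, NComm N' H X) ∧
      (∀ φ : G ≃* G, (fun X : Set G => (φ : G → G) '' X) '' 𝒳 = 𝒳 →
        (φ : G → G) '' H = H) := by
  obtain ⟨X₀, hX₀⟩ := hne
  have hmem1 : ∀ X ∈ 𝒳, (1:G) ∈ X := fun X hX => (happrox X hX).1
  have hsymm : ∀ X ∈ 𝒳, X⁻¹ = X := fun X hX => ((happrox X hX).2.1).symm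
  have hpow : ∀ X ∈ 𝒳, ∀ n : ℕ, ACov (K ^ n) (X ^ (n+1)) X := by
    intro X hX
    apply acov_pow (hmem1 X hX)
    obtain ⟨F, hF, hFs⟩ := (happrox X hX).2.2
    exact ⟨F, hF, hFs⟩
  have hcv : ∀ X ∈ 𝒳, ∀ Y ∈ 𝒳, ACov N X Y := by
    intro X hX Y hY
    obtain ⟨Z₀, Z₁, h0, h1, hs0, hs1⟩ := hcomm X hX Y hY
    exact ⟨Z₀, h0, hs0⟩
  have hX₀sqP : IsPB 𝒳 ((X₀ : Set G) * X₀) :=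
    ⟨{X₀}, by simpa using hX₀, ⟨X₀, Finset.mem_singleton_self X₀⟩, by simp⟩
  have hPexists : ∃ n, ∃ B, IsPB 𝒳 B ∧ GoodS 𝒳 n B := by
    refine ⟨K * N, (X₀ : Set G) * X₀, hX₀sqP, ?_⟩
    intro X hX T hTsub hTsep
    have hBX : ACov (K * N) ((X₀ : Set G) * X₀) X := acov_of_isPB hpow hcv hX₀sqP X hX
    apply sep_card_le hBX T hTsub
    intro a ha b hb hab
    rw [hsymm X hX]
    exact hTsep a ha b hb hab
  set d : ℕ := Nat.find hPexists with hdDef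
  obtain ⟨B₀, hB₀P, hB₀good⟩ : ∃ B, IsPB 𝒳 B ∧ GoodS 𝒳 d B := Nat.find_spec hPexists
  have hd1 : 1 ≤ d := by
    rcases Nat.eq_zero_or_pos d with hd0 | h
    · exfalso
      have h1B : (1:G) ∈ B₀ := one_mem_of_isPB hmem1 hB₀P
      have hcard := hB₀good X₀ hX₀ {1} (by simpa using h1B)
        (by intro a ha b hb hab; simp only [Finset.mem_singleton] at ha hb
            rw [ha, hb] at hab; exact absurd rfl hab)
      rw [Finset.card_singleton, hd0] at hcard
      omega
    · exact h
  have hdmin : ∀ B, IsPB 𝒳 B → ¬ GoodS 𝒳 (d-1) B := by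
    intro B hBP hBg
    exact Nat.find_min hPexists (show d - 1 < d by omega) ⟨B, hBP, hBg⟩
  set U : Set G := SchU 𝒳 d with hU
  obtain ⟨s₀, hs₀𝒳, hs₀ne, hB₀eq⟩ := hB₀P
  set s₀' : Finset (Set G) := insert X₀ s₀ with hs₀'
  set B₀' : Set G := ⋂ Y ∈ s₀', Y * Y with hB₀'def
  have hs₀'𝒳 : (s₀' : Set (Set G)) ⊆ 𝒳 := by
    intro Y hY
    rw [Finset.mem_coe, hs₀', Finset.mem_insert] at hY
    rcases hY with rfl | hY
    · exact hX₀
    · exact hs₀𝒳 (Finset.mem_coe.mpr hY)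
  have hB₀'P : IsPB 𝒳 B₀' := ⟨s₀', hs₀'𝒳, ⟨X₀, Finset.mem_insert_self _ _⟩, rfl⟩
  have hB₀'subB₀ : B₀' ⊆ B₀ := by
    rw [hB₀eq]
    intro x hx
    simp only [hB₀'def, Set.mem_iInter] at hx ⊢
    intro Y hY
    exact hx Y (Finset.mem_insert_of_mem hY)
  have hB₀'good : GoodS 𝒳 d B₀' := hB₀good.mono hB₀'subB₀
  have hB₀'U : B₀' ⊆ U := fun x hx => Set.mem_sUnion.mpr ⟨B₀', ⟨hB₀'P, hB₀'good⟩, hx⟩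
  have hUone : (1:G) ∈ U := hB₀'U (one_mem_of_isPB hmem1 hB₀'P)
  have hUinv : ∀ u ∈ U, u⁻¹ ∈ U := by
    intro u hu
    obtain ⟨B, ⟨hBP, hBg⟩, huB⟩ := Set.mem_sUnion.mp hu
    exact Set.mem_sUnion.mpr ⟨B, ⟨hBP, hBg⟩, inv_mem_of_isPB hsymm hBP huB⟩
  have h6sym : ((X₀ : Set G) ^ 6)⁻¹ = (X₀ : Set G) ^ 6 := by rw [← inv_pow, hsymm X₀ hX₀]
  obtain ⟨T₀, hT₀card, hT₀U, hT₀cover⟩ := cover_lemma X₀ hX₀ hmem1 hsymm hd1 hdmin hpow hcv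
  have hUleft : U ⊆ ((T₀⁻¹ : Finset G) : Set G) * (X₀ : Set G) ^ 6 := by
    intro u hu
    obtain ⟨p, hp, v, hv, hpv⟩ := hT₀cover (hUinv u hu)
    refine ⟨v⁻¹, by rw [Finset.coe_inv]; exact Set.inv_mem_inv.mpr hv, p⁻¹, ?_, ?_⟩
    · rw [← h6sym]; exact Set.inv_mem_inv.mpr hp
    · have hpv' : p * v = u⁻¹ := hpv
      have : v⁻¹ * p⁻¹ = u := by rw [← mul_inv_rev, hpv', inv_inv]
      exact this
  have hUprod : ∃ Fp : Finset G, U * U ⊆ (Fp : Set G) * X₀ := by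
    have hconjAll : ∀ v ∈ T₀, ∃ R : Finset G,
        ∀ p ∈ (X₀ : Set G) ^ 12, v⁻¹ * p * v ∈ (R : Set G) * X₀ :=
      fun v hv => conj_lemma X₀ hX₀ hsymm hpow hcv (hT₀U (Finset.mem_coe.mpr hv))
    choose! RR hRR using hconjAll
    refine ⟨T₀.biUnion (fun vj => T₀.biUnion (fun vi =>
      (RR vj).image (fun r => vi⁻¹ * vj * r))), ?_⟩
    rintro x ⟨u₁, hu₁, u₂, hu₂, rfl⟩
    obtain ⟨vi', hvi', p, hp, hu₁eq⟩ := hUleft hu₁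
    obtain ⟨p', hp', vj, hvj, hu₂eq⟩ := hT₀cover hu₂
    have hviT : vi'⁻¹ ∈ T₀ := by
      rw [Finset.coe_inv, Set.mem_inv] at hvi'
      exact_mod_cast hvi'
    have hvjT : vj ∈ T₀ := by exact_mod_cast hvj
    have hpp' : p * p' ∈ (X₀ : Set G) ^ 12 := by
      have h66 : (X₀ : Set G) ^ 6 * (X₀ : Set G) ^ 6 = (X₀ : Set G) ^ 12 := by rw [← pow_add]
      rw [← h66]; exact Set.mul_mem_mul hp hp'
    obtain ⟨r, hr, x₀, hx₀, hreq⟩ := hRR vj hvjT (p * p') hpp'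
    have hrR : r ∈ RR vj := by exact_mod_cast hr
    refine ⟨vi' * vj * r, ?_, x₀, hx₀, ?_⟩
    · have hmem : vi' * vj * r ∈ T₀.biUnion (fun vj => T₀.biUnion (fun vi =>
          (RR vj).image (fun r => vi⁻¹ * vj * r))) := by
        refine Finset.mem_biUnion.mpr ⟨vj, hvjT, Finset.mem_biUnion.mpr ⟨vi'⁻¹, hviT, ?_⟩⟩
        refine Finset.mem_image.mpr ⟨r, hrR, ?_⟩
        rw [inv_inv]
      exact_mod_cast hmem
    · have h2 : p' * vj = u₂ := hu₂eq
      have h1 : vi' * p = u₁ := hu₁eq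
      calc vi' * vj * r * x₀ = (vi' * vj) * (r * x₀) := by group
        _ = (vi' * vj) * (vj⁻¹ * (p * p') * vj) := by
            have hreq' : r * x₀ = vj⁻¹ * (p * p') * vj := hreq
            rw [hreq']
        _ = (vi' * p) * (p' * vj) := by group
        _ = u₁ * u₂ := by rw [h1, h2]
  obtain ⟨Fp, hFp⟩ := hUprod
  obtain ⟨S₀, hS₀card, hS₀sub⟩ := cocover_lemma hsymm hcv s₀' hs₀'𝒳 hX₀
  have hUsymm : U = U⁻¹ := by
    ext u
    constructor
    · intro hu
      rw [Set.mem_inv]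
      exact hUinv u hu
    · intro hu
      rw [Set.mem_inv] at hu
      have := hUinv u⁻¹ hu
      rwa [inv_inv] at this
  refine ⟨U, ⟨(Fp * S₀).card, hUone, hUsymm, Fp * S₀, le_refl _, ?_⟩,
    ⟨(K * N) * K ^ 5 * N + N ^ s₀'.card, ?_⟩, ?_⟩
  · calc U * U ⊆ (Fp : Set G) * X₀ := hFp
      _ ⊆ (Fp : Set G) * ((S₀ : Set G) * B₀') := Set.mul_subset_mul_left hS₀sub
      _ ⊆ (Fp : Set G) * ((S₀ : Set G) * U) :=
          Set.mul_subset_mul_left (Set.mul_subset_mul_left hB₀'U)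
      _ = ((Fp * S₀ : Finset G) : Set G) * U := by rw [Finset.coe_mul, mul_assoc]
  · intro X hX
    obtain ⟨W, hWcard, hWsub⟩ : ACov (K ^ 5) ((X₀ : Set G) ^ 6) X₀ := hpow X₀ hX₀ 5
    obtain ⟨Z, hZcard, hZsub⟩ : ACov N X₀ X := hcv X₀ hX₀ X hX
    obtain ⟨S₁, hS₁card, hS₁sub⟩ := cocover_lemma hsymm hcv s₀' hs₀'𝒳 hX
    refine ⟨T₀⁻¹ * W * Z, S₁, ?_, ?_, ?_, ?_⟩
    · calc (T₀⁻¹ * W * Z).card ≤ (T₀⁻¹ * W).card * Z.card := Finset.card_mul_le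
        _ ≤ (T₀⁻¹.card * W.card) * Z.card :=
            Nat.mul_le_mul_right _ Finset.card_mul_le
        _ ≤ ((K * N) * K ^ 5) * N := by
            rw [Finset.card_inv]
            exact Nat.mul_le_mul (Nat.mul_le_mul hT₀card hWcard) hZcard
        _ ≤ (K * N) * K ^ 5 * N + N ^ s₀'.card := Nat.le_add_right _ _
    · exact hS₁card.trans (Nat.le_add_left _ _)
    · calc U ⊆ ((T₀⁻¹ : Finset G) : Set G) * (X₀ : Set G) ^ 6 := hUleft
        _ ⊆ ((T₀⁻¹ : Finset G) : Set G) * ((W : Set G) * X₀) :=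
            Set.mul_subset_mul_left hWsub
        _ ⊆ ((T₀⁻¹ : Finset G) : Set G) * ((W : Set G) * ((Z : Set G) * X)) :=
            Set.mul_subset_mul_left (Set.mul_subset_mul_left hZsub)
        _ = ((T₀⁻¹ * W * Z : Finset G) : Set G) * X := by
            rw [Finset.coe_mul, Finset.coe_mul]
            simp only [mul_assoc]
    · exact hS₁sub.trans (Set.mul_subset_mul_left hB₀'U)
  · intro φ hφ
    have hφmem : ∀ X ∈ 𝒳, (φ : G → G) '' X ∈ 𝒳 := by
      intro X hX
      rw [← hφ]
      exact ⟨X, hX, rfl⟩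
    have hφ'mem : ∀ X ∈ 𝒳, (φ.symm : G → G) '' X ∈ 𝒳 := by
      intro X hX
      have hXmem : X ∈ (fun X : Set G => (φ : G → G) '' X) '' 𝒳 := hφ.symm ▸ hX
      obtain ⟨X', hX', hXeq⟩ := hXmem
      have himg : (φ.symm : G → G) '' X = X' := by
        rw [← hXeq]
        ext y
        simp
      rw [himg]; exact hX'
    have h1 := schU_image_subset (𝒳 := 𝒳) (d := d) φ hφmem hφ'mem
    have h2 := schU_image_subset (𝒳 := 𝒳) (d := d) φ.symm hφ'mem
      (by intro X hX; simpa using hφmem X hX)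
    apply Set.Subset.antisymm h1
    intro u hu
    have hmem : (φ.symm : G → G) u ∈ SchU 𝒳 d := h2 ⟨u, hu, rfl⟩
    exact ⟨φ.symm u, hmem, by simp⟩
end

section
/- Let G be a group, let K, N be natural numbers, let 𝒳 be a family of K-approximate subgroups of G any two of which are N-commensurable, let n ≥ 1, and let X₀, …, X_{n−1} ∈ 𝒳. Then the product set T := X₀·X₁·⋯·X_{n−1} is ((NK)^{n−1}·N)-commensurable with every X ∈ 𝒳. -/
open Pointwise

lemma one_mem_list_prod {G : Type*} [Group G] :
    ∀ l : List (Set G), (∀ A ∈ l, (1 : G) ∈ A) → (1 : G) ∈ l.prod := by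
  intro l
  induction l with
  | nil => intro _; simp
  | cons a t ih =>
    intro h
    rw [List.prod_cons]
    have : (1 : G) = 1 * 1 := by simp
    rw [this]
    exact Set.mul_mem_mul (h a (by simp)) (ih fun A hA => h A (by simp [hA]))

lemma aux_prod {G : Type*} [Group G] (K N : ℕ) (𝒳 : Set (Set G))
    (happrox : ∀ X ∈ 𝒳, IsApproxSubgroup K X)
    (hcomm : ∀ X ∈ 𝒳, ∀ Y ∈ 𝒳, NComm N X Y) :
    ∀ l : List (Set G), (∀ A ∈ l, A ∈ 𝒳) → ∀ x ∈ 𝒳,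
      ∃ W : Finset G, W.card ≤ (N * K) ^ l.length ∧
        l.prod * x ⊆ (W : Set G) * x := by
  classical
  intro l
  induction l using List.reverseRecOn with
  | nil =>
    intro _ x hx
    exact ⟨{1}, by simp, by simp⟩
  | append_singleton t b ih =>
    intro hmem x hx
    have hb : b ∈ 𝒳 := hmem b (by simp)
    obtain ⟨W, hWcard, hW⟩ := ih (fun A hA => hmem A (by simp [hA])) b hb
    obtain ⟨Z₀, Z₁, hZ₀, hZ₁, hbZ, _⟩ := hcomm b hb x hx
    obtain ⟨-, -, F, hF, hFx⟩ := happrox x hx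
    refine ⟨W * Z₀ * F, ?_, ?_⟩
    · calc (W * Z₀ * F).card ≤ (W * Z₀).card * F.card := Finset.card_mul_le
        _ ≤ W.card * Z₀.card * F.card :=
          Nat.mul_le_mul_right _ Finset.card_mul_le
        _ ≤ (N * K) ^ t.length * N * K :=
          Nat.mul_le_mul (Nat.mul_le_mul hWcard hZ₀) hF
        _ = (N * K) ^ (t ++ [b]).length := by
          simp [pow_succ]; ring
    · have h1 : (t ++ [b]).prod * x = t.prod * b * x := by
        rw [List.prod_append, List.prod_singleton]
      rw [h1]
      calc t.prod * b * x ⊆ (W : Set G) * b * x :=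
            Set.mul_subset_mul_right hW
        _ ⊆ (W : Set G) * ((Z₀ : Set G) * x) * x :=
            Set.mul_subset_mul_right (Set.mul_subset_mul_left hbZ)
        _ = (W : Set G) * (Z₀ : Set G) * (x * x) := by
            simp only [mul_assoc]
        _ ⊆ (W : Set G) * (Z₀ : Set G) * ((F : Set G) * x) :=
            Set.mul_subset_mul_left hFx
        _ = ((W * Z₀ * F : Finset G) : Set G) * x := by
            push_cast
            simp only [mul_assoc]

/-- Lemma 2.1: a product of `n` members of a uniform family of commensurable
approximate subgroups is `(NK)^(n-1)·N`-commensurable with every member. -/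
theorem prod_commensurable
    {G : Type*} [Group G] (K N : ℕ) (𝒳 : Set (Set G))
    (happrox : ∀ X ∈ 𝒳, IsApproxSubgroup K X)
    (hcomm : ∀ X ∈ 𝒳, ∀ Y ∈ 𝒳, NComm N X Y)
    (n : ℕ) (hn : 1 ≤ n) (Xf : Fin n → Set G) (hXf : ∀ i, Xf i ∈ 𝒳)
    (X : Set G) (hX : X ∈ 𝒳) :
    NComm ((N * K) ^ (n - 1) * N) (List.ofFn Xf).prod X := by
  classical
  set l : List (Set G) := List.ofFn Xf with hl
  have hlne : l ≠ [] := by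
    simp [hl, List.ofFn_eq_nil_iff]
    omega
  have hmem : ∀ A ∈ l, A ∈ 𝒳 := by
    intro A hA
    rw [hl, List.mem_ofFn] at hA
    obtain ⟨i, rfl⟩ := hA
    exact hXf i
  set b : Set G := l.getLast hlne with hb
  have hbm : b ∈ 𝒳 := hmem b (List.getLast_mem hlne)
  have hsplit : l = l.dropLast ++ [b] := (List.dropLast_append_getLast hlne).symm
  have hdmem : ∀ A ∈ l.dropLast, A ∈ 𝒳 := fun A hA =>
    hmem A (List.dropLast_subset l hA)
  obtain ⟨W, hWcard, hW⟩ := aux_prod K N 𝒳 happrox hcomm l.dropLast hdmem b hbm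
  obtain ⟨Z₀, Z₁, hZ₀, hZ₁, hbZ, hXZ⟩ := hcomm b hbm X hX
  have hlen : l.dropLast.length = n - 1 := by simp [hl]
  rw [hlen] at hWcard
  have hprodsplit : l.prod = l.dropLast.prod * b := by
    conv_lhs => rw [hsplit]
    rw [List.prod_append, List.prod_singleton]
  have hN : 1 ≤ N := by
    by_contra h
    push_neg at h
    interval_cases N
    obtain ⟨A₀, A₁, hA₀, hA₁, hs, -⟩ := hcomm X hX X hX
    have hA : A₀ = ∅ := Finset.card_eq_zero.mp (Nat.le_zero.mp hA₀)
    rw [hA] at hs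
    simp only [Finset.coe_empty, Set.empty_mul, Set.subset_empty_iff] at hs
    have h1 := (happrox X hX).1
    rw [hs] at h1
    exact h1
  have hK : 1 ≤ K := by
    by_contra h
    push_neg at h
    interval_cases K
    obtain ⟨h1, -, F, hF, hFx⟩ := happrox X hX
    have hF0 : F = ∅ := Finset.card_eq_zero.mp (Nat.le_zero.mp hF)
    have hm : (1 : G) ∈ X * X := by simpa using Set.mul_mem_mul h1 h1
    have := hFx hm
    rw [hF0] at this
    simp at this
  refine ⟨W * Z₀, Z₁, ?_, ?_, ?_, ?_⟩
  · calc (W * Z₀).card ≤ W.card * Z₀.card := Finset.card_mul_le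
      _ ≤ (N * K) ^ (n - 1) * N := Nat.mul_le_mul hWcard hZ₀
  · calc Z₁.card ≤ N := hZ₁
      _ ≤ (N * K) ^ (n - 1) * N := Nat.le_mul_of_pos_left _ (by positivity)
  · rw [hprodsplit]
    calc l.dropLast.prod * b ⊆ (W : Set G) * b := hW
      _ ⊆ (W : Set G) * ((Z₀ : Set G) * X) := Set.mul_subset_mul_left hbZ
      _ = ((W * Z₀ : Finset G) : Set G) * X := by push_cast; rw [mul_assoc]
  · calc X ⊆ (Z₁ : Set G) * b := hXZ
      _ ⊆ (Z₁ : Set G) * (l.dropLast.prod * b) := by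
        apply Set.mul_subset_mul_left
        intro y hy
        exact ⟨1, one_mem_list_prod _ (fun A hA => (happrox A (hdmem A hA)).1),
          y, hy, one_mul y⟩
      _ = (Z₁ : Set G) * l.prod := by rw [hprodsplit]
end

section
/- Let G be a group and let X, Y ⊆ G be K-approximate subgroups that are N-commensurable. Then there exists a finite set E ⊆ G with |E| ≤ K·N such that X·X ⊆ E·((X·X) ∩ (Y·Y)). -/
open Pointwise

/-- Lemma 2.3: if `X` and `Y` are `N`-commensurable `K`-approximate subgroups,
then `X·X ⊆ E·((X·X) ∩ (Y·Y))` for some `E` with `|E| ≤ K·N`. -/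
theorem square_covered_by_intersection
    {G : Type*} [Group G] (K N : ℕ) (X Y : Set G)
    (hX : IsApproxSubgroup K X) (hY : IsApproxSubgroup K Y)
    (hXY : NComm N X Y) :
    ∃ E : Finset G, E.card ≤ K * N ∧ X * X ⊆ (E : Set G) * ((X * X) ∩ (Y * Y)) := by
  classical
  obtain ⟨hX1, hXinv, F, hFcard, hFX⟩ := hX
  obtain ⟨Z₀, Z₁, hZ₀, hZ₁, hXZY, hYZX⟩ := hXY
  -- For each z, choose a witness in X ∩ z • Y when it exists.
  set φ : G → G := fun z =>
    if h : (X ∩ (fun y => z * y) '' Y).Nonempty then h.choose else 1 with hφ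
  set D : Finset G := Z₀.image φ with hD
  have hXD : X ⊆ (D : Set G) * ((X * X) ∩ (Y * Y)) := by
    intro x hx
    obtain ⟨z, hz, y, hy, rfl⟩ := hXZY hx
    simp only [Finset.mem_coe] at hz
    have hne : (X ∩ (fun y => z * y) '' Y).Nonempty :=
      ⟨z * y, hx, ⟨y, hy, rfl⟩⟩
    have hw := hne.choose_spec
    set w := hne.choose with hwdef
    obtain ⟨hwX, y', hy', hwy'⟩ := hw
    have hφz : φ z = w := by
      show dite _ _ _ = w
      rw [dif_pos hne]
    refine ⟨w, ?_, w⁻¹ * (z * y), ?_, by group⟩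
    · exact Finset.mem_coe.mpr (Finset.mem_image.mpr ⟨z, hz, hφz⟩)
    constructor
    · exact ⟨w⁻¹, by rw [hXinv]; exact Set.inv_mem_inv.mpr hwX, z * y, hx, rfl⟩
    · have : w⁻¹ * (z * y) = y'⁻¹ * y := by rw [← hwy']; group
      rw [this]
      exact ⟨y'⁻¹, by rw [hY.2.1]; exact Set.inv_mem_inv.mpr hy', y, hy, rfl⟩
  refine ⟨F * D, ?_, ?_⟩
  · calc (F * D).card ≤ F.card * D.card := Finset.card_mul_le
      _ ≤ K * N := Nat.mul_le_mul hFcard ((Finset.card_image_le).trans hZ₀)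
  · intro g hg
    have := hFX hg
    obtain ⟨f, hf, x, hx, rfl⟩ := this
    obtain ⟨d, hd, w, hw, rfl⟩ := hXD hx
    exact ⟨f * d, by push_cast; exact Set.mul_mem_mul hf hd, w, hw, by group⟩
end

section
/- Let G be a group, let X, Y ⊆ G be K-approximate subgroups that are N-commensurable, and let Z ⊆ G be a symmetric set (Z = Z⁻¹) with Y·Y ⊆ Z. Then for every k ∈ ℕ there exists a finite set E ⊆ G with |E| ≤ K·N such that X·X ⊆ E·((X·X ∩ Z)^{2^k}); consequently [X·X : (X·X ∩ Z)^{2^k}] ≤ K·N. -/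
open Pointwise

/-- The index `[X:Y]`: the supremum of cardinalities of finite subsets of `X`
whose left translates of `Y` are pairwise disjoint. -/
noncomputable def idx {G : Type*} [Group G] (X Y : Set G) : ℕ :=
  sSup {n | ∃ X₀ : Finset G, (X₀ : Set G) ⊆ X ∧
    (X₀ : Set G).PairwiseDisjoint (fun x => x • Y) ∧ X₀.card = n}

/-- If `X`, `Y` are `N`-commensurable `K`-approximate subgroups and `Z` is a symmetric
set containing `Y·Y`, then for every `k`, `X·X` is covered by at most `K·N` translates
of `(X·X ∩ Z)^(2^k)`; in particular `[X·X : (X·X ∩ Z)^(2^k)] ≤ K·N`. -/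
theorem square_covered_by_powers_of_intersection
    {G : Type*} [Group G] (K N : ℕ) (X Y Z : Set G)
    (hX : IsApproxSubgroup K X) (hY : IsApproxSubgroup K Y)
    (hXY : NComm N X Y) (hZsymm : Z = Z⁻¹) (hYZ : Y * Y ⊆ Z) :
    ∀ k : ℕ,
      (∃ E : Finset G, E.card ≤ K * N ∧
        X * X ⊆ (E : Set G) * ((X * X ∩ Z) ^ (2 ^ k))) ∧
      idx (X * X) ((X * X ∩ Z) ^ (2 ^ k)) ≤ K * N := by
  classical
  obtain ⟨hX1, hXinv, F, hF, hFX⟩ := hX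
  obtain ⟨hY1, hYinv, -⟩ := hY
  obtain ⟨Z₀, Z₁, hZ₀, hZ₁, hXZ₀, hYZ₁⟩ := hXY
  set W : Set G := X * X ∩ Z with hWdef
  have h1W : (1 : G) ∈ W :=
    ⟨⟨1, hX1, 1, hX1, one_mul 1⟩, hYZ ⟨1, hY1, 1, hY1, one_mul 1⟩⟩
  have hWsymm : W⁻¹ = W := by
    have hXXinv : (X * X)⁻¹ = X * X := by
      rw [mul_inv_rev, ← hXinv]
    rw [hWdef, Set.inter_inv, hXXinv, ← hZsymm]
  -- choice of representatives in each coset z • Y meeting X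
  have f : ∀ z : G, ∃ e : G, (X ∩ z • Y).Nonempty → e ∈ X ∩ z • Y := by
    intro z
    by_cases h : (X ∩ z • Y).Nonempty
    · exact ⟨h.choose, fun _ => h.choose_spec⟩
    · exact ⟨1, fun h' => absurd h' h⟩
  choose g hg using f
  set E₀ : Finset G := Z₀.image g with hE₀def
  have hXE₀ : X ⊆ (E₀ : Set G) * W := by
    intro x hx
    obtain ⟨z, hz, y, hy, hzy⟩ := hXZ₀ hx
    have hne : (X ∩ z • Y).Nonempty := ⟨x, hx, ⟨y, hy, hzy⟩⟩
    obtain ⟨heX, y₀, hy₀, hzy₀⟩ := hg z hne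
    refine ⟨g z, Finset.mem_coe.2 (Finset.mem_image_of_mem g hz), (g z)⁻¹ * x, ?_, ?_⟩
    · constructor
      · have : (g z)⁻¹ ∈ X := by
          have : g z ∈ X⁻¹ := hXinv ▸ heX
          exact Set.mem_inv.1 (by simpa using this)
        exact Set.mul_mem_mul this hx
      · have hx' : (g z)⁻¹ * x = y₀⁻¹ * y := by
          simp only [smul_eq_mul] at hzy hzy₀
          rw [← hzy, ← hzy₀]
          group
        rw [hx']
        have : y₀⁻¹ ∈ Y := by
          have : y₀ ∈ Y⁻¹ := hYinv ▸ hy₀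
          exact Set.mem_inv.1 (by simpa using this)
        exact hYZ (Set.mul_mem_mul this hy)
    · exact mul_inv_cancel_left _ _
  -- the covering set
  set E : Finset G := F * E₀ with hEdef
  have hEcard : E.card ≤ K * N := by
    calc E.card ≤ F.card * E₀.card := Finset.card_mul_le
      _ ≤ K * N := Nat.mul_le_mul hF ((Finset.card_image_le).trans hZ₀)
  have hcovW : X * X ⊆ (E : Set G) * W := by
    calc X * X ⊆ (F : Set G) * X := hFX
      _ ⊆ (F : Set G) * ((E₀ : Set G) * W) := Set.mul_subset_mul_left hXE₀
      _ = (E : Set G) * W := by rw [hEdef, Finset.coe_mul, mul_assoc]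
  intro k
  have hWpow : W ⊆ W ^ (2 ^ k) := by
    have := Set.pow_subset_pow_right h1W (Nat.one_le_two_pow (n := k))
    simpa using this
  have hcov : X * X ⊆ (E : Set G) * W ^ (2 ^ k) :=
    hcovW.trans (Set.mul_subset_mul_left hWpow)
  refine ⟨⟨E, hEcard, hcov⟩, ?_⟩
  -- now the index bound
  have hWpowsymm : (W ^ (2 ^ k))⁻¹ = W ^ (2 ^ k) := by
    rw [← inv_pow, hWsymm]
  refine csSup_le ⟨0, ∅, by simp, by simp, by simp⟩ ?_
  rintro n ⟨X₀, hX₀sub, hPD, rfl⟩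
  have hchoice : ∀ x ∈ X₀, ∃ e, e ∈ E ∧ x ∈ e • (W ^ (2 ^ k)) := by
    intro x hx
    obtain ⟨e, he, w, hw, hew⟩ := hcov (hX₀sub hx)
    exact ⟨e, Finset.mem_coe.1 he, ⟨w, hw, hew⟩⟩
  choose! φ hφE hφmem using hchoice
  have hcard : X₀.card ≤ E.card := by
    apply Finset.card_le_card_of_injOn φ hφE
    intro x hx x' hx' heq
    rw [Finset.mem_coe] at hx hx'
    by_contra hne
    have h1 : φ x ∈ x • (W ^ (2 ^ k)) := by
      obtain ⟨w, hw, hew⟩ := hφmem x hx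
      simp only [smul_eq_mul] at hew
      refine ⟨w⁻¹, ?_, ?_⟩
      · rw [← hWpowsymm]; exact Set.inv_mem_inv.2 hw
      · show x * w⁻¹ = φ x
        rw [eq_comm, eq_mul_inv_iff_mul_eq]; exact hew
    have h2 : φ x ∈ x' • (W ^ (2 ^ k)) := by
      obtain ⟨w, hw, hew⟩ := hφmem x' hx'
      simp only [smul_eq_mul] at hew
      refine ⟨w⁻¹, ?_, ?_⟩
      · rw [← hWpowsymm]; exact Set.inv_mem_inv.2 hw
      · show x' * w⁻¹ = φ x
        rw [heq, eq_comm, eq_mul_inv_iff_mul_eq]; exact hew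
    exact Set.not_disjoint_iff.2 ⟨φ x, h1, h2⟩
      (hPD (Finset.mem_coe.2 hx) (Finset.mem_coe.2 hx') hne)
  exact hcard.trans hEcard
end

section
/- With the construction below: if Z, Z' ∈ 𝒵 with Z ⊆ Z' and Z ∈ 𝒵_m, then Z' ∈ 𝒵_m and k_{Z'} ≤ k_Z. In particular, if Z₀, …, Z_n are all strong, then Z₀ ∪ ⋯ ∪ Z_n is strong. -/
open Pointwise

/-- `𝒳² = {X·X : X ∈ 𝒳}`. -/
def sqFam {G : Type*} [Group G] (𝒳 : Set (Set G)) : Set (Set G) :=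
  {A | ∃ X ∈ 𝒳, A = X * X}

/-- `𝒵`: unions of nonempty finite subfamilies of `𝒳²`. -/
def unionFam {G : Type*} [Group G] (𝒳 : Set (Set G)) : Set (Set G) :=
  {Z | ∃ S : Finset (Set G), S.Nonempty ∧ (S : Set (Set G)) ⊆ sqFam 𝒳 ∧ Z = ⋃₀ (S : Set (Set G))}

/-- `n(Z)`: least size of a finite subfamily of `𝒳²` with union `Z`. -/
noncomputable def nOf {G : Type*} [Group G] (𝒳 : Set (Set G)) (Z : Set G) : ℕ :=
  sInf {n | ∃ S : Finset (Set G), S.Nonempty ∧ (S : Set (Set G)) ⊆ sqFam 𝒳 ∧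
    Z = ⋃₀ (S : Set (Set G)) ∧ S.card = n}

/-- `M(Z,k) = max{[X : (X∩Z)^(2^k)] : X ∈ 𝒳²}`. -/
noncomputable def Mval {G : Type*} [Group G] (𝒳 : Set (Set G)) (Z : Set G) (k : ℕ) : ℕ :=
  sSup {r | ∃ X ∈ sqFam 𝒳, r = idx X ((X ∩ Z) ^ (2 ^ k))}

/-- `m = min{M(Z,k) : Z ∈ 𝒵, k ∈ ℕ}`. -/
noncomputable def mnum {G : Type*} [Group G] (𝒳 : Set (Set G)) : ℕ :=
  sInf {r | ∃ Z ∈ unionFam 𝒳, ∃ k : ℕ, r = Mval 𝒳 Z k}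

/-- `𝒵_m = {Z ∈ 𝒵 : min_k M(Z,k) = m}`. -/
noncomputable def Zmfam {G : Type*} [Group G] (𝒳 : Set (Set G)) : Set (Set G) :=
  {Z | Z ∈ unionFam 𝒳 ∧ sInf {r | ∃ k : ℕ, r = Mval 𝒳 Z k} = mnum 𝒳}

/-- `k_Z`: the least `k` with `M(Z,k) = m`. -/
noncomputable def kOf {G : Type*} [Group G] (𝒳 : Set (Set G)) (Z : Set G) : ℕ :=
  sInf {k | Mval 𝒳 Z k = mnum 𝒳}

/-- `k₀ = min{k_Z : Z ∈ 𝒵_m}`. -/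
noncomputable def kzero {G : Type*} [Group G] (𝒳 : Set (Set G)) : ℕ :=
  sInf {k | ∃ Z ∈ Zmfam 𝒳, kOf 𝒳 Z = k}

/-- `Z` is strong: `Z ∈ 𝒵_m` and `k_Z = k₀`. -/
noncomputable def IsStrong {G : Type*} [Group G] (𝒳 : Set (Set G)) (Z : Set G) : Prop :=
  Z ∈ Zmfam 𝒳 ∧ kOf 𝒳 Z = kzero 𝒳

/-- `η(Z) = {X ∈ 𝒳² : [X : (X∩Z)^(2^(k₀+1))] = m}`. -/
noncomputable def etaFam {G : Type*} [Group G] (𝒳 : Set (Set G)) (Z : Set G) : Set (Set G) :=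
  {X | X ∈ sqFam 𝒳 ∧ idx X ((X ∩ Z) ^ (2 ^ (kzero 𝒳 + 1))) = mnum 𝒳}

/-- `N(Z) = ⋃_{X ∈ η(Z)} X ∩ (X∩Z)^(2^(k₀+1))`. -/
noncomputable def NSet {G : Type*} [Group G] (𝒳 : Set (Set G)) (Z : Set G) : Set G :=
  ⋃ X ∈ etaFam 𝒳 Z, X ∩ (X ∩ Z) ^ (2 ^ (kzero 𝒳 + 1))

/-- `n₀ = min{n(Z) : Z strong}`. -/
noncomputable def nzero {G : Type*} [Group G] (𝒳 : Set (Set G)) : ℕ :=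
  sInf {n | ∃ Z : Set G, IsStrong 𝒳 Z ∧ nOf 𝒳 Z = n}

/-- `N_Z = n₀^(2^(k₀+1)) · K^(2^(k₀+1)+4) · N^(2^(k₀+1))`. -/
noncomputable def NZconst {G : Type*} [Group G] (𝒳 : Set (Set G)) (K N : ℕ) : ℕ :=
  nzero 𝒳 ^ (2 ^ (kzero 𝒳 + 1)) * K ^ (2 ^ (kzero 𝒳 + 1) + 4) * N ^ (2 ^ (kzero 𝒳 + 1))

/-- `𝒤 = {N(Z) : Z strong containing a strong Z' with n(Z') = n₀}`. -/
noncomputable def famI {G : Type*} [Group G] (𝒳 : Set (Set G)) : Set (Set G) :=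
  {A | ∃ Z : Set G, IsStrong 𝒳 Z ∧
    (∃ Z' : Set G, IsStrong 𝒳 Z' ∧ Z' ⊆ Z ∧ nOf 𝒳 Z' = nzero 𝒳) ∧ A = NSet 𝒳 Z}

/-- `𝒤' = {N(Z) : Z strong with n(Z) = n₀}`. -/
noncomputable def famI' {G : Type*} [Group G] (𝒳 : Set (Set G)) : Set (Set G) :=
  {A | ∃ Z : Set G, IsStrong 𝒳 Z ∧ nOf 𝒳 Z = nzero 𝒳 ∧ A = NSet 𝒳 Z}

/-- `m' = min_{I ∈ 𝒤} max{[I:J] : J ∈ 𝒤'}`. -/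
noncomputable def mprime {G : Type*} [Group G] (𝒳 : Set (Set G)) : ℕ :=
  sInf {r | ∃ I ∈ famI 𝒳, r = sSup {s | ∃ J ∈ famI' 𝒳, s = idx I J}}

/-- `𝒤_{m'} = {I ∈ 𝒤 : max{[I:J] : J ∈ 𝒤'} = m'}`. -/
noncomputable def famImprime {G : Type*} [Group G] (𝒳 : Set (Set G)) : Set (Set G) :=
  {I | I ∈ famI 𝒳 ∧ sSup {s | ∃ J ∈ famI' 𝒳, s = idx I J} = mprime 𝒳}

/-- `𝒴`: finite unions of members of `𝒤_{m'}`. -/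
noncomputable def famY {G : Type*} [Group G] (𝒳 : Set (Set G)) : Set (Set G) :=
  {Y | ∃ S : Finset (Set G), S.Nonempty ∧ (S : Set (Set G)) ⊆ famImprime 𝒳 ∧
    Y = ⋃₀ (S : Set (Set G))}

-- key bound lemma
lemma idx_bound {G : Type*} [Group G] {K N : ℕ} {𝒳 : Set (Set G)}
    (happrox : ∀ X ∈ 𝒳, IsApproxSubgroup K X)
    (hcomm : ∀ X ∈ 𝒳, ∀ Y ∈ 𝒳, NComm N X Y)
    {X Z : Set G} (hX : X ∈ sqFam 𝒳) (hZ : Z ∈ unionFam 𝒳) (k : ℕ) :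
    ∀ n ∈ {n | ∃ X₀ : Finset G, (X₀ : Set G) ⊆ X ∧
      (X₀ : Set G).PairwiseDisjoint (fun x => x • ((X ∩ Z) ^ (2 ^ k))) ∧ X₀.card = n},
      n ≤ K * N := by
  classical
  obtain ⟨A, hA, rfl⟩ := hX
  obtain ⟨S, ⟨W, hW⟩, hSsub, rfl⟩ := hZ
  obtain ⟨B, hB, rfl⟩ := hSsub hW
  obtain ⟨h1A, hAinv, F₁, hF₁card, hF₁⟩ := happrox A hA
  obtain ⟨h1B, hBinv, -⟩ := happrox B hB
  obtain ⟨Z₀, Z₁, hZ₀card, -, hAB, -⟩ := hcomm A hA B hB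
  set Zset : Set G := ⋃₀ (S : Set (Set G)) with hZdef
  set Y : Set G := (A * A) ∩ (B * B) with hYdef
  have hBB : (B * B : Set G) ⊆ Zset := Set.subset_sUnion_of_mem hW
  have hinvA : ∀ a ∈ A, a⁻¹ ∈ A := by
    intro a ha; rw [hAinv]; simpa using ha
  have hinvB : ∀ b ∈ B, b⁻¹ ∈ B := by
    intro b hb; rw [hBinv]; simpa using hb
  have h1Y : (1 : G) ∈ Y :=
    ⟨⟨1, h1A, 1, h1A, one_mul 1⟩, ⟨1, h1B, 1, h1B, one_mul 1⟩⟩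
  have hYsymm : ∀ y ∈ Y, y⁻¹ ∈ Y := by
    rintro y ⟨⟨a₁, ha₁, a₂, ha₂, rfl⟩, ⟨b₁, hb₁, b₂, hb₂, hb⟩⟩
    constructor
    · exact ⟨a₂⁻¹, hinvA _ ha₂, a₁⁻¹, hinvA _ ha₁, (mul_inv_rev a₁ a₂).symm⟩
    · refine ⟨b₂⁻¹, hinvB _ hb₂, b₁⁻¹, hinvB _ hb₁, ?_⟩
      have hb' : b₁ * b₂ = a₁ * a₂ := hb
      show b₂⁻¹ * b₁⁻¹ = (a₁ * a₂)⁻¹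
      rw [← hb', mul_inv_rev]
  have hYP : Y ⊆ ((A * A) ∩ Zset) ^ (2 ^ k) := by
    refine Set.Subset.trans ?_ (Set.subset_pow ?_ (by positivity))
    · exact fun y hy => ⟨hy.1, hBB hy.2⟩
    · exact ⟨⟨1, h1A, 1, h1A, one_mul 1⟩, hBB ⟨1, h1B, 1, h1B, one_mul 1⟩⟩
  -- choice of representatives
  set g : G → G := fun z => if h : (A ∩ z • (B : Set G)).Nonempty then h.choose else 1 with hg
  have coverA : ∀ a ∈ A, ∃ z ∈ Z₀, a ∈ g z • Y := by
    intro a ha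
    obtain ⟨z, hz, b, hb, hzb⟩ := hAB ha
    have hne : (A ∩ z • (B : Set G)).Nonempty := ⟨a, ha, ⟨b, hb, hzb⟩⟩
    have hspec : g z ∈ A ∩ z • (B : Set G) := by
      rw [hg]; simp only [dif_pos hne]; exact hne.choose_spec
    obtain ⟨hgA, b', hb', hgz⟩ := hspec
    refine ⟨z, hz, (g z)⁻¹ * a, ⟨?_, ?_⟩, by simp [smul_eq_mul, mul_assoc]⟩
    · exact ⟨(g z)⁻¹, hinvA _ hgA, a, ha, rfl⟩
    · refine ⟨b'⁻¹, hinvB _ hb', b, hb, ?_⟩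
      have : (g z)⁻¹ = b'⁻¹ * z⁻¹ := by rw [← hgz]; simp [smul_eq_mul, mul_inv_rev]
      rw [this, ← hzb]; group
  set F : Finset G := F₁ * Z₀.image g with hF
  have hFcard : F.card ≤ K * N := by
    calc F.card ≤ F₁.card * (Z₀.image g).card := Finset.card_mul_le
    _ ≤ K * N := Nat.mul_le_mul hF₁card ((Finset.card_image_le).trans hZ₀card)
  have coverX : ∀ x ∈ A * A, ∃ f ∈ F, x ∈ f • Y := by
    intro x hx
    obtain ⟨c, hc, a, ha, hca⟩ := hF₁ hx
    obtain ⟨z, hz, y, hy, hgy⟩ := coverA a ha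
    refine ⟨c * g z, Finset.mul_mem_mul hc (Finset.mem_image_of_mem g hz), y, hy, ?_⟩
    have hgy' : g z • y = a := hgy
    have hca' : c * a = x := hca
    show (c * g z) • y = x
    rw [smul_eq_mul] at hgy' ⊢
    rw [mul_assoc, hgy', hca']
  -- counting
  rintro n ⟨X₀, hX₀sub, hdisj, rfl⟩
  set P : Set G := ((A * A) ∩ Zset) ^ (2 ^ k) with hP
  set φ : G → G := fun x => if h : ∃ f ∈ F, x ∈ f • Y then h.choose else 1 with hφ
  have hφspec : ∀ x ∈ X₀, φ x ∈ F ∧ x ∈ φ x • Y := by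
    intro x hx
    have h : ∃ f ∈ F, x ∈ f • Y := coverX x (hX₀sub hx)
    rw [hφ]; simp only [dif_pos h]
    obtain ⟨hf, hmem⟩ := h.choose_spec
    exact ⟨hf, hmem⟩
  have hφP : ∀ x ∈ X₀, φ x ∈ x • P := by
    intro x hx
    obtain ⟨-, y, hy, hxy⟩ := hφspec x hx
    refine Set.smul_set_mono hYP ⟨y⁻¹, hYsymm y hy, ?_⟩
    have hxy' : φ x * y = x := hxy
    show x • y⁻¹ = φ x
    rw [smul_eq_mul]
    exact (eq_mul_inv_of_mul_eq hxy').symm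
  refine (Finset.card_le_card_of_injOn φ (fun x hx => (hφspec x hx).1) ?_).trans hFcard
  intro x hx x' hx' heq
  by_contra hne
  have hd := hdisj hx hx' hne
  have h1 : φ x ∈ x • P := hφP x (by simpa using hx)
  have h2 : φ x ∈ x' • P := heq ▸ hφP x' (by simpa using hx')
  exact Set.disjoint_left.mp hd h1 h2

lemma idx_le {G : Type*} [Group G] {K N : ℕ} {𝒳 : Set (Set G)}
    (happrox : ∀ X ∈ 𝒳, IsApproxSubgroup K X)
    (hcomm : ∀ X ∈ 𝒳, ∀ Y ∈ 𝒳, NComm N X Y)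
    {X Z : Set G} (hX : X ∈ sqFam 𝒳) (hZ : Z ∈ unionFam 𝒳) (k : ℕ) :
    idx X ((X ∩ Z) ^ (2 ^ k)) ≤ K * N :=
  csSup_le' (idx_bound happrox hcomm hX hZ k)

section Rest
variable {G : Type*} [Group G] {K N : ℕ} {𝒳 : Set (Set G)}

lemma le_Mval (happrox : ∀ X ∈ 𝒳, IsApproxSubgroup K X)
    (hcomm : ∀ X ∈ 𝒳, ∀ Y ∈ 𝒳, NComm N X Y)
    {X Z : Set G} (hX : X ∈ sqFam 𝒳) (hZ : Z ∈ unionFam 𝒳) (k : ℕ) :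
    idx X ((X ∩ Z) ^ (2 ^ k)) ≤ Mval 𝒳 Z k := by
  apply le_csSup
  · exact ⟨K * N, by rintro r ⟨X', hX', rfl⟩; exact idx_le happrox hcomm hX' hZ k⟩
  · exact ⟨X, hX, rfl⟩

lemma idx_anti (happrox : ∀ X ∈ 𝒳, IsApproxSubgroup K X)
    (hcomm : ∀ X ∈ 𝒳, ∀ Y ∈ 𝒳, NComm N X Y)
    {X Z Z' : Set G} (hX : X ∈ sqFam 𝒳) (hZ : Z ∈ unionFam 𝒳)
    (hsub : Z ⊆ Z') (k : ℕ) :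
    idx X ((X ∩ Z') ^ (2 ^ k)) ≤ idx X ((X ∩ Z) ^ (2 ^ k)) := by
  apply csSup_le_csSup
  · exact ⟨K * N, fun n hn => idx_bound happrox hcomm hX hZ k n hn⟩
  · exact ⟨0, ∅, by simp, by simp, by simp⟩
  · rintro n ⟨X₀, h1, h2, rfl⟩
    refine ⟨X₀, h1, h2.mono ?_, rfl⟩
    intro x
    exact Set.smul_set_mono
      (Set.pow_subset_pow_left (Set.inter_subset_inter_right X hsub))

lemma Mval_anti (hne : 𝒳.Nonempty)
    (happrox : ∀ X ∈ 𝒳, IsApproxSubgroup K X)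
    (hcomm : ∀ X ∈ 𝒳, ∀ Y ∈ 𝒳, NComm N X Y)
    {Z Z' : Set G} (hZ : Z ∈ unionFam 𝒳) (hZ' : Z' ∈ unionFam 𝒳)
    (hsub : Z ⊆ Z') (k : ℕ) :
    Mval 𝒳 Z' k ≤ Mval 𝒳 Z k := by
  obtain ⟨A, hA⟩ := hne
  have hsq : A * A ∈ sqFam 𝒳 := ⟨A, hA, rfl⟩
  refine csSup_le ?_ ?_
  · exact ⟨_, A * A, hsq, rfl⟩
  rintro r ⟨X, hX, rfl⟩
  exact (idx_anti happrox hcomm hX hZ hsub k).trans (le_Mval happrox hcomm hX hZ k)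

lemma mnum_le {Z : Set G} (hZ : Z ∈ unionFam 𝒳) (k : ℕ) :
    mnum 𝒳 ≤ Mval 𝒳 Z k :=
  Nat.sInf_le ⟨Z, hZ, k, rfl⟩

lemma mem_Zm_iff {Z : Set G} (hZ : Z ∈ unionFam 𝒳) :
    Z ∈ Zmfam 𝒳 ↔ ∃ k, Mval 𝒳 Z k = mnum 𝒳 := by
  constructor
  · rintro ⟨-, hmin⟩
    have hne : {r | ∃ k : ℕ, r = Mval 𝒳 Z k}.Nonempty := ⟨Mval 𝒳 Z 0, 0, rfl⟩
    obtain ⟨k, hk⟩ := Nat.sInf_mem hne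
    exact ⟨k, by rw [← hk, hmin]⟩
  · rintro ⟨k, hk⟩
    refine ⟨hZ, le_antisymm ?_ ?_⟩
    · exact Nat.sInf_le ⟨k, hk.symm⟩
    · have hne : {r | ∃ k : ℕ, r = Mval 𝒳 Z k}.Nonempty := ⟨Mval 𝒳 Z 0, 0, rfl⟩
      obtain ⟨k', hk'⟩ := Nat.sInf_mem hne
      exact hk' ▸ mnum_le hZ k'

lemma Mval_kOf {Z : Set G} (hZm : Z ∈ Zmfam 𝒳) : Mval 𝒳 Z (kOf 𝒳 Z) = mnum 𝒳 := by
  have h : ∃ k, Mval 𝒳 Z k = mnum 𝒳 := (mem_Zm_iff hZm.1).mp hZm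
  exact Nat.sInf_mem h

end Rest


/-- Monotonicity of `𝒵_m` and `k_Z` under inclusion; unions of strong sets are strong. -/
theorem Zm_mono_and_union_strong
    {G : Type*} [Group G] (K N : ℕ) (𝒳 : Set (Set G)) (hne : 𝒳.Nonempty)
    (happrox : ∀ X ∈ 𝒳, IsApproxSubgroup K X)
    (hcomm : ∀ X ∈ 𝒳, ∀ Y ∈ 𝒳, NComm N X Y) :
    (∀ Z Z' : Set G, Z ∈ unionFam 𝒳 → Z' ∈ unionFam 𝒳 → Z ⊆ Z' →
      Z ∈ Zmfam 𝒳 → Z' ∈ Zmfam 𝒳 ∧ kOf 𝒳 Z' ≤ kOf 𝒳 Z) ∧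
    (∀ (n : ℕ) (Zf : Fin (n + 1) → Set G), (∀ i, IsStrong 𝒳 (Zf i)) →
      IsStrong 𝒳 (⋃ i, Zf i)) := by
  classical
  have main : ∀ Z Z' : Set G, Z ∈ unionFam 𝒳 → Z' ∈ unionFam 𝒳 → Z ⊆ Z' →
      Z ∈ Zmfam 𝒳 → Z' ∈ Zmfam 𝒳 ∧ kOf 𝒳 Z' ≤ kOf 𝒳 Z := by
    intro Z Z' hZ hZ' hsub hZm
    have hk : Mval 𝒳 Z (kOf 𝒳 Z) = mnum 𝒳 := Mval_kOf hZm
    have heq : Mval 𝒳 Z' (kOf 𝒳 Z) = mnum 𝒳 :=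
      le_antisymm (hk ▸ Mval_anti hne happrox hcomm hZ hZ' hsub (kOf 𝒳 Z))
        (mnum_le hZ' (kOf 𝒳 Z))
    exact ⟨(mem_Zm_iff hZ').mpr ⟨_, heq⟩, Nat.sInf_le heq⟩
  refine ⟨main, ?_⟩
  intro n Zf hstrong
  have hZi : ∀ i, Zf i ∈ unionFam 𝒳 := fun i => (hstrong i).1.1
  choose S hSne hSsub hSeq using hZi
  have hU : (⋃ i, Zf i) ∈ unionFam 𝒳 := by
    refine ⟨Finset.univ.biUnion S, ?_, ?_, ?_⟩
    · obtain ⟨W, hW⟩ := hSne 0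
      exact ⟨W, Finset.mem_biUnion.mpr ⟨0, Finset.mem_univ _, hW⟩⟩
    · intro W hW
      simp only [Finset.coe_biUnion, Finset.coe_univ, Set.mem_iUnion] at hW
      obtain ⟨i, -, hi⟩ := hW
      exact hSsub i hi
    · simp only [Finset.coe_biUnion, Finset.coe_univ, Set.sUnion_iUnion]
      simp only [Set.mem_univ, Set.iUnion_true]
      exact Set.iUnion_congr fun i => (hSeq i)
  have hsub0 : Zf 0 ⊆ ⋃ i, Zf i := Set.subset_iUnion _ 0
  obtain ⟨hUm, hUk⟩ := main (Zf 0) (⋃ i, Zf i) (hstrong 0).1.1 hU hsub0 (hstrong 0).1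
  refine ⟨hUm, le_antisymm ?_ ?_⟩
  · exact (hstrong 0).2 ▸ hUk
  · exact Nat.sInf_le ⟨_, hUm, rfl⟩
end

section
/- Let G be a group, let 𝒳 be a family of K-approximate subgroups of G any two of which are N-commensurable, let X₁, …, X_n ∈ 𝒳, let Z := X₁ ∪ ⋯ ∪ X_n, and let s ≥ 1. Then the s-fold product set Zˢ is (nˢ·(NK)^{s−1}·N)-commensurable with every X ∈ 𝒳. -/
open Pointwise

/-! If `A ⊆ Z₀·B` and `B·B ⊆ F·B`, then `A·B ⊆ Z₀·F·B`: the product of two members of the family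
is covered by `NK` left translates of the right-hand factor. Hence, for `Z = ⋃ Xᵢ`, induction on
`s` gives `Zˢ ⊆ ⋃ᵢ Tᵢ·Xᵢ` with `∑ |Tᵢ| ≤ nˢ(NK)^(s-1)`: multiplying by `Z` on the right turns each
translate `t·Xⱼ` into at most `NK` translates of `Xᵢ`, for each of the `n` indices `i`.
Covering every `Xᵢ` by `N` translates of `X` bounds `Zˢ`; conversely `X ⊆ W·X₁ ⊆ W·Zˢ`
because `1 ∈ Z`. -/

open Finset

section

variable {G : Type*} [Group G] {ι : Type*} [Fintype ι] {Xf : ι → Set G}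

lemma IsApproxSubgroup.one_le {K : ℕ} {A : Set G} (hA : IsApproxSubgroup K A) : 1 ≤ K := by
  obtain ⟨h1, -, F, hF, hAA⟩ := hA
  obtain ⟨f, hf, -⟩ := Set.mem_mul.mp (hAA (Set.mul_mem_mul h1 h1))
  exact (card_pos.mpr ⟨f, hf⟩).trans_le hF

lemma mul_subset_mul_of_subset_mul {A B Z F : Set G} (hA : A ⊆ Z * B) (hB : B * B ⊆ F * B) :
    A * B ⊆ Z * F * B :=
  calc A * B ⊆ Z * B * B := Set.mul_subset_mul_right hA
    _ = Z * (B * B) := mul_assoc ..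
    _ ⊆ Z * (F * B) := Set.mul_subset_mul_left hB
    _ = Z * F * B := (mul_assoc ..).symm

lemma NComm.exists_mul_subset {K N : ℕ} {A B : Set G} (hAB : NComm N A B)
    (hB : IsApproxSubgroup K B) : ∃ E : Finset G, #E ≤ N * K ∧ A * B ⊆ E * B := by
  classical
  obtain ⟨Z, -, hZ, -, hAZ, -⟩ := hAB
  obtain ⟨-, -, F, hF, hBF⟩ := hB
  refine ⟨Z * F, card_mul_le.trans (Nat.mul_le_mul hZ hF), ?_⟩
  rw [coe_mul]
  exact mul_subset_mul_of_subset_mul hAZ hBF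

lemma exists_mul_iUnion_subset {M : ℕ}
    (hXX : ∀ j i, ∃ E : Finset G, #E ≤ M ∧ Xf j * Xf i ⊆ E * Xf i)
    {Y : Set G} {T : ι → Finset G} (hY : Y ⊆ ⋃ i, T i * Xf i) :
    ∃ T' : ι → Finset G, ∑ i, #(T' i) ≤ Fintype.card ι * M * ∑ i, #(T i) ∧
      Y * ⋃ i, Xf i ⊆ ⋃ i, T' i * Xf i := by
  classical
  choose E hEcard hE using hXX
  refine ⟨fun i => univ.biUnion fun j => T j * E j i, ?_, ?_⟩
  · calc ∑ i, #(univ.biUnion fun j => T j * E j i)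
        ≤ ∑ i : ι, ∑ j, #(T j) * M := sum_le_sum fun i _ => card_biUnion_le.trans <|
          sum_le_sum fun j _ => card_mul_le.trans (Nat.mul_le_mul_left _ (hEcard j i))
      _ = Fintype.card ι * M * ∑ i, #(T i) := by
          rw [sum_const, card_univ, smul_eq_mul, ← sum_mul]; ring
  · calc Y * ⋃ i, Xf i ⊆ (⋃ j, (T j : Set G) * Xf j) * ⋃ i, Xf i := Set.mul_subset_mul_right hY
      _ = ⋃ i, ⋃ j, (T j : Set G) * (Xf j * Xf i) := by
          simp only [Set.iUnion_mul, Set.mul_iUnion, mul_assoc]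
      _ ⊆ ⋃ i, ⋃ j, (T j : Set G) * (E j i * Xf i) :=
          Set.iUnion₂_mono fun i j => Set.mul_subset_mul_left (hE j i)
      _ = ⋃ i, ↑(univ.biUnion fun j => T j * E j i) * Xf i := by
          simp only [coe_biUnion, coe_univ, Set.mem_univ, Set.iUnion_true, coe_mul,
            Set.iUnion_mul, mul_assoc]

lemma exists_iUnion_pow_subset {M : ℕ}
    (hXX : ∀ j i, ∃ E : Finset G, #E ≤ M ∧ Xf j * Xf i ⊆ E * Xf i) (s : ℕ) :
    ∃ T : ι → Finset G, ∑ i, #(T i) ≤ Fintype.card ι ^ (s + 1) * M ^ s ∧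
      (⋃ i, Xf i) ^ (s + 1) ⊆ ⋃ i, T i * Xf i := by
  induction s with
  | zero => exact ⟨fun _ => {1}, by simp, by simp⟩
  | succ s ih =>
    obtain ⟨T, hTcard, hT⟩ := ih
    obtain ⟨T', hT'card, hT'⟩ := exists_mul_iUnion_subset hXX hT
    refine ⟨T', hT'card.trans ?_, by rwa [pow_succ]⟩
    calc Fintype.card ι * M * ∑ i, #(T i)
        ≤ Fintype.card ι * M * (Fintype.card ι ^ (s + 1) * M ^ s) := by gcongr
      _ = Fintype.card ι ^ (s + 1 + 1) * M ^ (s + 1) := by ring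

lemma exists_subset_mul_of_subset_iUnion {N : ℕ} {X Y : Set G} {T : ι → Finset G}
    (hY : Y ⊆ ⋃ i, T i * Xf i) (hXf : ∀ i, ∃ C : Finset G, #C ≤ N ∧ Xf i ⊆ C * X) :
    ∃ T' : Finset G, #T' ≤ (∑ i, #(T i)) * N ∧ Y ⊆ T' * X := by
  classical
  choose C hCcard hC using hXf
  refine ⟨univ.biUnion fun i => T i * C i, ?_, ?_⟩
  · calc #(univ.biUnion fun i => T i * C i) ≤ ∑ i, #(T i) * N := card_biUnion_le.trans <|
          sum_le_sum fun i _ => card_mul_le.trans (Nat.mul_le_mul_left _ (hCcard i))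
      _ = (∑ i, #(T i)) * N := (sum_mul ..).symm
  · calc Y ⊆ ⋃ i, (T i : Set G) * (C i * X) :=
          hY.trans (Set.iUnion_mono fun i => Set.mul_subset_mul_left (hC i))
      _ = ↑(univ.biUnion fun i => T i * C i) * X := by
          simp only [coe_biUnion, coe_univ, Set.mem_univ, Set.iUnion_true, coe_mul,
            Set.iUnion_mul, mul_assoc]

end

/-- The `s`-fold product of `Z = X₁ ∪ ⋯ ∪ X_n` (members of a uniform family of
commensurable approximate subgroups) is `(nˢ·(NK)^(s-1)·N)`-commensurable with
every member of the family. -/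
theorem union_pow_commensurable
    {G : Type*} [Group G] (K N : ℕ) (𝒳 : Set (Set G))
    (happrox : ∀ X ∈ 𝒳, IsApproxSubgroup K X)
    (hcomm : ∀ X ∈ 𝒳, ∀ Y ∈ 𝒳, NComm N X Y)
    (n : ℕ) (hn : 1 ≤ n) (Xf : Fin n → Set G) (hXf : ∀ i, Xf i ∈ 𝒳)
    (s : ℕ) (hs : 1 ≤ s) (X : Set G) (hX : X ∈ 𝒳) :
    NComm (n ^ s * (N * K) ^ (s - 1) * N) ((⋃ i, Xf i) ^ s) X := by
  obtain ⟨k, rfl⟩ := Nat.exists_eq_add_of_le' hs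
  obtain ⟨T, hTcard, hZT⟩ := exists_iUnion_pow_subset (fun j i =>
    (hcomm _ (hXf j) _ (hXf i)).exists_mul_subset (happrox _ (hXf i))) k
  obtain ⟨T', hT'card, hZX⟩ := exists_subset_mul_of_subset_iUnion hZT fun i =>
    let ⟨C, _, hC, _, hXC, _⟩ := hcomm _ (hXf i) X hX; ⟨C, hC, hXC⟩
  obtain ⟨W, -, hW, -, hXW, -⟩ := hcomm X hX (Xf ⟨0, hn⟩) (hXf _)
  have h1Z : (1 : G) ∈ ⋃ i, Xf i := Set.mem_iUnion.mpr ⟨⟨0, hn⟩, (happrox _ (hXf _)).1⟩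
  refine ⟨T', W, ?_, ?_, hZX, ?_⟩
  · simpa using hT'card.trans (Nat.mul_le_mul_right N hTcard)
  · rcases N.eq_zero_or_pos with rfl | hN
    · simpa using hW
    · refine hW.trans (Nat.le_mul_of_pos_left N (Nat.mul_pos (Nat.pow_pos hn) (Nat.pow_pos ?_)))
      exact Nat.mul_pos hN (happrox X hX).one_le
  · exact hXW.trans <| Set.mul_subset_mul_left <|
      (Set.subset_iUnion Xf _).trans (Set.subset_pow h1Z k.succ_ne_zero)
end

section
/- Let G be a group and let A₁, …, A_n ⊆ G be K-approximate subgroups any two of which are N-commensurable. Then Y := A₁ ∪ ⋯ ∪ A_n satisfies 1 ∈ Y, Y = Y⁻¹, and there is a finite set T ⊆ G with |T| ≤ n²·N·K such that Y·Y ⊆ T·Y; in particular Y is an (n²·N·K)-approximate subgroup. -/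
open Pointwise

/-- A union of `n` pairwise `N`-commensurable `K`-approximate subgroups is an
`n²·N·K`-approximate subgroup. -/
theorem union_approx_subgroup
    {G : Type*} [Group G] (K N : ℕ) (n : ℕ) (hn : 1 ≤ n)
    (A : Fin n → Set G)
    (happrox : ∀ i, IsApproxSubgroup K (A i))
    (hcomm : ∀ i j, NComm N (A i) (A j)) :
    (1 : G) ∈ ⋃ i, A i ∧
    (⋃ i, A i) = (⋃ i, A i)⁻¹ ∧
    (∃ T : Finset G, T.card ≤ n ^ 2 * N * K ∧
      (⋃ i, A i) * (⋃ i, A i) ⊆ (T : Set G) * ⋃ i, A i) ∧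
    IsApproxSubgroup (n ^ 2 * N * K) (⋃ i, A i) := by
  classical
  choose F hFcard hFsub using fun i => (happrox i).2.2
  choose Z₀ Z₁ hZ₀ hZ₁ hsub₀ hsub₁ using hcomm
  have i0 : Fin n := ⟨0, hn⟩
  have h1 : (1 : G) ∈ ⋃ i, A i := Set.mem_iUnion.2 ⟨i0, (happrox i0).1⟩
  have hinv : (⋃ i, A i) = (⋃ i, A i)⁻¹ := by
    rw [Set.iUnion_inv]
    exact Set.iUnion_congr fun i => (happrox i).2.1
  set T : Finset G := Finset.univ.biUnion
    (fun p : Fin n × Fin n => Z₀ p.1 p.2 * F p.2) with hT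
  have hTcard : T.card ≤ n ^ 2 * N * K := by
    calc T.card ≤ ∑ p : Fin n × Fin n, (Z₀ p.1 p.2 * F p.2).card :=
          Finset.card_biUnion_le
      _ ≤ ∑ _p : Fin n × Fin n, N * K := by
          refine Finset.sum_le_sum fun p _ => ?_
          calc (Z₀ p.1 p.2 * F p.2).card ≤ (Z₀ p.1 p.2).card * (F p.2).card :=
                Finset.card_mul_le
            _ ≤ N * K := Nat.mul_le_mul (hZ₀ p.1 p.2) (hFcard p.2)
      _ = n ^ 2 * N * K := by
          simp [Finset.sum_const, Finset.card_univ, sq, mul_assoc]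
  have hmul : (⋃ i, A i) * (⋃ i, A i) ⊆ (T : Set G) * ⋃ i, A i := by
    rintro x ⟨a, ha, b, hb, rfl⟩
    obtain ⟨i, hai⟩ := Set.mem_iUnion.1 ha
    obtain ⟨j, hbj⟩ := Set.mem_iUnion.1 hb
    obtain ⟨z, hz, a', ha', rfl⟩ := hsub₀ i j hai
    have : a' * b ∈ A j * A j := Set.mul_mem_mul ha' hbj
    obtain ⟨f, hf, c, hc, hfc⟩ := hFsub j this
    refine ⟨z * f, ?_, c, Set.mem_iUnion.2 ⟨j, hc⟩, by show (z * f) * c = (z * a') * b; simp only [] at hfc; rw [mul_assoc, hfc, ← mul_assoc]⟩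
    have hzf : z * f ∈ Z₀ i j * F j := Finset.mul_mem_mul hz hf
    exact Finset.mem_coe.2 (Finset.mem_biUnion.2 ⟨(i, j), Finset.mem_univ _, hzf⟩)
  exact ⟨h1, hinv, ⟨T, hTcard, hmul⟩, h1, hinv, T, hTcard, hmul⟩
end

section
/- Let G be a group and let 𝒴 be a nonempty family of subsets of G such that every Y ∈ 𝒴 is symmetric (Y = Y⁻¹) and contains 1, 𝒴 is closed under finite unions, and any two members of 𝒴 are N-commensurable. Then there do not exist Y₀, Y₁, …, Y_N ∈ 𝒴 with ⟨Y₀⟩ ⊊ ⟨Y₁⟩ ⊊ ⋯ ⊊ ⟨Y_N⟩, where ⟨Y⟩ denotes the subgroup of G generated by Y. -/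
/-!
Put `K = ⟨Y₀⟩`. The union `U` of the chain lies in `𝒴`, so `U ⊆ Z·K` for some `|Z| ≤ N`.
As `K ≤ ⟨Yᵢ⟩`, every `Yᵢ` is covered by the cosets `zK` with `z ∈ Z ∩ ⟨Yᵢ⟩`; hence the sets
`Z ∩ ⟨Yᵢ⟩` strictly increase along the chain. They are nonempty because `1 ∈ Y₀`, and
`N + 1` strictly increasing nonempty subsets of `Z` cannot exist.
-/

open Pointwise

open Finset

lemma Finset.lt_card_of_strictMono {α : Type*} {n : ℕ} {Z : Finset α}
    (f : Fin (n + 1) → Finset α) (hf : StrictMono f) (h0 : (f 0).Nonempty)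
    (hZ : ∀ i, f i ⊆ Z) : n < #Z := by
  have hcard : StrictMono fun i => #(f i) := fun i j hij => card_lt_card (hf hij)
  have hmaps : Set.MapsTo (fun i => #(f i)) (univ : Finset (Fin (n + 1))) (Icc 1 #Z) :=
    fun i _ => mem_Icc.2
      ⟨h0.card_pos.trans_le (hcard.monotone (Fin.zero_le i)), card_le_card (hZ i)⟩
  simpa using card_le_card_of_injOn _ hmaps hcard.injective.injOn

section

variable {G : Type*} [Group G]

open scoped Classical in
lemma subset_filter_mem_mul {H K : Subgroup G} (hKH : K ≤ H) {Y : Set G} {Z : Finset G}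
    (hYH : Y ⊆ H) (hYZ : Y ⊆ (Z : Set G) * K) :
    Y ⊆ ((Z.filter (· ∈ H) : Finset G) : Set G) * K := by
  intro y hy
  obtain ⟨z, hz, k, hk, rfl⟩ := hYZ hy
  have hzH : z ∈ H := by simpa using mul_mem (hYH hy) (inv_mem (hKH hk))
  exact Set.mul_mem_mul (by simpa using ⟨hz, hzH⟩) hk

open scoped Classical in
lemma strictMono_filter_mem_closure {ι : Type*} [Preorder ι] {Y : ι → Set G} {K : Subgroup G}
    {Z : Finset G} (hY : StrictMono fun i => Subgroup.closure (Y i))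
    (hK : ∀ i, K ≤ Subgroup.closure (Y i)) (hYZ : ∀ i, Y i ⊆ (Z : Set G) * K) :
    StrictMono fun i => Z.filter (· ∈ Subgroup.closure (Y i)) := by
  intro i j hij
  refine ssubset_of_subset_not_subset
    (monotone_filter_right _ fun _ _ hz => (hY hij).le hz) ?_
  intro hji
  have hYj : Y j ⊆ Subgroup.closure (Y i) := by
    refine (subset_filter_mem_mul (hK j) Subgroup.subset_closure (hYZ j)).trans ?_
    rintro _ ⟨z, hz, k, hk, rfl⟩
    exact mul_mem (mem_filter.1 (hji hz)).2 (hK i hk)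
  exact (hY hij).not_ge ((Subgroup.closure_le _).2 hYj)

end

theorem no_long_chain_of_generated_subgroups_general
    {G : Type*} [Group G] (N : ℕ) (𝒴 : Set (Set G))
    (hone : ∀ Y ∈ 𝒴, (1 : G) ∈ Y)
    (hunion : ∀ Y ∈ 𝒴, ∀ Y' ∈ 𝒴, Y ∪ Y' ∈ 𝒴)
    (hcomm : ∀ Y ∈ 𝒴, ∀ Y' ∈ 𝒴, NComm N Y Y') :
    ¬ ∃ Yf : Fin (N + 1) → Set G, (∀ i, Yf i ∈ 𝒴) ∧
      (∀ i j : Fin (N + 1), i < j →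
        Subgroup.closure (Yf i) < Subgroup.closure (Yf j)) := by
  classical
  rintro ⟨Y, hY𝒴, hchain⟩
  set U := univ.sup' univ_nonempty Y
  have hU : U ∈ 𝒴 :=
    SupClosed.finsetSup'_mem (fun _ hA _ hB => hunion _ hA _ hB) _ fun i _ => hY𝒴 i
  obtain ⟨Z, -, hZ, -, hUZ, -⟩ := hcomm U hU (Y 0) (hY𝒴 0)
  have hmono : StrictMono fun i => Subgroup.closure (Y i) := fun i j => hchain i j
  set K := Subgroup.closure (Y 0)
  have hK : ∀ i, K ≤ Subgroup.closure (Y i) := fun i => hmono.monotone (Fin.zero_le i)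
  have hYZ : ∀ i, Y i ⊆ (Z : Set G) * K := fun i =>
    (le_sup' Y (mem_univ i)).trans
      (hUZ.trans (Set.mul_subset_mul_left Subgroup.subset_closure))
  have h0 : (Z.filter (· ∈ K)).Nonempty := by
    obtain ⟨z, hz, -⟩ := subset_filter_mem_mul le_rfl Subgroup.subset_closure (hYZ 0)
      (hone _ (hY𝒴 0))
    exact ⟨z, hz⟩
  exact (Finset.lt_card_of_strictMono _ (strictMono_filter_mem_closure hmono hK hYZ) h0
    fun i => filter_subset _ _).not_ge hZ

/-- Lemma 2.11: no chain `⟨Y₀⟩ ⊊ ⟨Y₁⟩ ⊊ ⋯ ⊊ ⟨Y_N⟩` of length `N+1` of generated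
subgroups exists in a uniformly `N`-commensurable family `𝒴` of symmetric sets
containing `1` which is closed under finite unions. -/
theorem no_long_chain_of_generated_subgroups
    {G : Type*} [Group G] (N : ℕ) (𝒴 : Set (Set G)) (hne : 𝒴.Nonempty)
    (hsymm : ∀ Y ∈ 𝒴, Y = Y⁻¹) (hone : ∀ Y ∈ 𝒴, (1 : G) ∈ Y)
    (hunion : ∀ Y ∈ 𝒴, ∀ Y' ∈ 𝒴, Y ∪ Y' ∈ 𝒴)
    (hcomm : ∀ Y ∈ 𝒴, ∀ Y' ∈ 𝒴, NComm N Y Y') :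
    ¬ ∃ Yf : Fin (N + 1) → Set G, (∀ i, Yf i ∈ 𝒴) ∧
      (∀ i j : Fin (N + 1), i < j →
        Subgroup.closure (Yf i) < Subgroup.closure (Yf j)) :=
  no_long_chain_of_generated_subgroups_general N 𝒴 hone hunion hcomm
end

section
/- Let G be a group and let 𝒴 be a nonempty family of subsets of G such that every Y ∈ 𝒴 is symmetric (Y = Y⁻¹) and contains 1, 𝒴 is closed under finite unions, and any two members of 𝒴 are N-commensurable. Then there exists Y_max ∈ 𝒴 such that ⟨Y⟩ ⊆ ⟨Y_max⟩ for every Y ∈ 𝒴, where ⟨Y⟩ denotes the subgroup of G generated by Y. -/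
open Pointwise

/-- There is a member of `𝒴` whose generated subgroup contains all
subgroups generated by members of `𝒴`. -/
theorem exists_max_generated_subgroup
    {G : Type*} [Group G] (N : ℕ) (𝒴 : Set (Set G)) (hne : 𝒴.Nonempty)
    (hsymm : ∀ Y ∈ 𝒴, Y = Y⁻¹) (hone : ∀ Y ∈ 𝒴, (1 : G) ∈ Y)
    (hunion : ∀ Y ∈ 𝒴, ∀ Y' ∈ 𝒴, Y ∪ Y' ∈ 𝒴)
    (hcomm : ∀ Y ∈ 𝒴, ∀ Y' ∈ 𝒴, NComm N Y Y') :
    ∃ Ymax ∈ 𝒴, ∀ Y ∈ 𝒴, Subgroup.closure Y ≤ Subgroup.closure Ymax := by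
  by_contra hcon
  push_neg at hcon
  obtain ⟨Y₀, hY₀⟩ := hne
  have h' : ∀ Y : 𝒴, ∃ Y' : 𝒴,
      ¬ Subgroup.closure (Y' : Set G) ≤ Subgroup.closure (Y : Set G) := by
    rintro ⟨Y, hY⟩
    obtain ⟨Y', hY', hle⟩ := hcon Y hY
    exact ⟨⟨Y', hY'⟩, hle⟩
  choose F hF using h'
  set g : 𝒴 → 𝒴 := fun Y => ⟨(Y : Set G) ∪ (F Y : Set G), hunion _ Y.2 _ (F Y).2⟩ with hg
  set seq : ℕ → 𝒴 := fun n => g^[n] ⟨Y₀, hY₀⟩ with hseq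
  have hsucc : ∀ n, seq (n + 1) = g (seq n) := fun n => Function.iterate_succ_apply' g n _
  have hsub : ∀ n, (seq n : Set G) ⊆ (seq (n + 1) : Set G) := by
    intro n; rw [hsucc n]; exact Set.subset_union_left
  have hsub' : ∀ m n : ℕ, m ≤ n → (seq m : Set G) ⊆ (seq n : Set G) := by
    intro m n hmn
    induction n with
    | zero =>
      have : m = 0 := Nat.le_zero.mp hmn
      subst this; exact fun x hx => hx
    | succ k ih =>
      rcases Nat.lt_or_ge m (k + 1) with h | h
      · exact (ih (Nat.lt_succ_iff.mp h)).trans (hsub k)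
      · have : m = k + 1 := le_antisymm hmn h
        subst this; exact fun x hx => hx
  have hnot : ∀ n, ∃ x ∈ (seq (n + 1) : Set G), x ∉ Subgroup.closure (seq n : Set G) := by
    intro n
    by_contra hc
    push_neg at hc
    have hle : Subgroup.closure ((seq (n + 1) : Set G)) ≤ Subgroup.closure (seq n : Set G) :=
      (Subgroup.closure_le _).mpr hc
    apply hF (seq n)
    refine le_trans ?_ hle
    apply Subgroup.closure_mono
    rw [hsucc n]
    exact Set.subset_union_right
  choose x hx hx' using hnot
  obtain ⟨Z₀, Z₁, hZ₀, hZ₁, hXY, hYX⟩ := hcomm _ (seq (N + 1)).2 _ (seq 0).2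
  have hdec : ∀ k : Fin (N + 1), ∃ z ∈ Z₀, ∃ y ∈ (seq 0 : Set G), z * y = x (k : ℕ) := by
    intro k
    refine Set.mem_mul.mp (hXY ?_)
    exact hsub' ((k : ℕ) + 1) (N + 1) (Nat.succ_le_succ (Nat.lt_succ_iff.mp k.2)) (hx (k : ℕ))
  choose z hz y hy hzy using hdec
  have key : ∀ i j : Fin (N + 1), (i : ℕ) < (j : ℕ) → z i ≠ z j := by
    intro i j hij heq
    apply hx' (j : ℕ)
    have h1 : x (i : ℕ) ∈ Subgroup.closure (seq (j : ℕ) : Set G) :=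
      Subgroup.subset_closure (hsub' ((i : ℕ) + 1) (j : ℕ) hij (hx (i : ℕ)))
    have h2 : y i ∈ Subgroup.closure (seq (j : ℕ) : Set G) :=
      Subgroup.subset_closure (hsub' 0 (j : ℕ) (Nat.zero_le _) (hy i))
    have h3 : y j ∈ Subgroup.closure (seq (j : ℕ) : Set G) :=
      Subgroup.subset_closure (hsub' 0 (j : ℕ) (Nat.zero_le _) (hy j))
    have hxj : x (j : ℕ) = x (i : ℕ) * ((y i)⁻¹ * y j) := by
      rw [← hzy j, ← hzy i, heq]; group
    rw [hxj]
    exact mul_mem h1 (mul_mem (inv_mem h2) h3)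
  have hcard : Z₀.card < (Finset.univ : Finset (Fin (N + 1))).card := by
    simpa using Nat.lt_succ_of_le hZ₀
  obtain ⟨i, -, j, -, hne', heq⟩ :=
    Finset.exists_ne_map_eq_of_card_lt_of_maps_to hcard (fun k _ => hz k)
  rcases hne'.lt_or_gt with h | h
  · exact key i j h heq
  · exact key j i h heq.symm
end

section
/- Let G be a group and let 𝒴 be a nonempty family of subsets of G such that every Y ∈ 𝒴 is symmetric (Y = Y⁻¹) and contains 1, 𝒴 is closed under finite unions, and any two members of 𝒴 are N-commensurable. Suppose Y_max ∈ 𝒴 is such that ⟨Y_max⟩ is maximal under inclusion among the subgroups {⟨Y⟩ : Y ∈ 𝒴}. Then there exists n₁ ∈ ℕ such that Y ⊆ (Y_max)^{n₁} for every Y ∈ 𝒴, where (Y_max)^{n₁} is the n₁-fold product set. -/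
open Pointwise

/-- Auxiliary: every element of the closure of a symmetric set lies in some power. -/
lemma mem_pow_of_mem_closure {G : Type*} [Group G] {A : Set G} (hs : A = A⁻¹)
    {x : G} (hx : x ∈ Subgroup.closure A) : ∃ n : ℕ, x ∈ A ^ n := by
  induction hx using Subgroup.closure_induction with
  | mem y hy => exact ⟨1, by simpa using hy⟩
  | one => exact ⟨0, by simp⟩
  | mul y z _ _ ihy ihz =>
      obtain ⟨n, hn⟩ := ihy
      obtain ⟨m, hm⟩ := ihz
      exact ⟨n + m, by rw [pow_add]; exact Set.mul_mem_mul hn hm⟩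
  | inv y _ ihy =>
      obtain ⟨n, hn⟩ := ihy
      refine ⟨n, ?_⟩
      have : A ^ n = (A ^ n)⁻¹ := by
        conv_lhs => rw [hs]
        exact inv_pow A n
      rw [this]
      simpa using hn

/-- Auxiliary recursive sequence of scales. -/
def gseq (df : ℕ → ℕ) : ℕ → ℕ
  | 0 => 1
  | (k + 1) => df (gseq df k) + 5

/-- Lemma 2.12: if `⟨Y_max⟩` is maximal among the generated subgroups of members of
`𝒴`, then some power of `Y_max` contains every member of `𝒴`. -/
theorem bounded_power_covers_family
    {G : Type*} [Group G] (N : ℕ) (𝒴 : Set (Set G)) (hne : 𝒴.Nonempty)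
    (hsymm : ∀ Y ∈ 𝒴, Y = Y⁻¹) (hone : ∀ Y ∈ 𝒴, (1 : G) ∈ Y)
    (hunion : ∀ Y ∈ 𝒴, ∀ Y' ∈ 𝒴, Y ∪ Y' ∈ 𝒴)
    (hcomm : ∀ Y ∈ 𝒴, ∀ Y' ∈ 𝒴, NComm N Y Y')
    (Ymax : Set G) (hYmax : Ymax ∈ 𝒴)
    (hmax : ∀ Y ∈ 𝒴, Subgroup.closure Ymax ≤ Subgroup.closure Y →
      Subgroup.closure Y = Subgroup.closure Ymax) :
    ∃ n₁ : ℕ, ∀ Y ∈ 𝒴, Y ⊆ Ymax ^ n₁ := by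
  by_contra hcon
  push_neg at hcon
  -- hcon : ∀ n, ∃ Y ∈ 𝒴, ∃ y ∈ Y, y ∉ Ymax ^ n
  simp only [Set.not_subset] at hcon
  choose Yf hYf yf hyfY hyf using hcon
  have hsY : Ymax = Ymax⁻¹ := hsymm Ymax hYmax
  have h1Y : (1 : G) ∈ Ymax := hone Ymax hYmax
  -- every witness lies in ⟨Ymax⟩, hence in some power of Ymax
  have hcl : ∀ n : ℕ, ∃ m : ℕ, yf n ∈ Ymax ^ m := by
    intro n
    have hY' : Yf n ∪ Ymax ∈ 𝒴 := hunion _ (hYf n) _ hYmax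
    have hle : Subgroup.closure Ymax ≤ Subgroup.closure (Yf n ∪ Ymax) :=
      Subgroup.closure_mono Set.subset_union_right
    have heq := hmax _ hY' hle
    have hxcl : yf n ∈ Subgroup.closure Ymax := by
      rw [← heq]
      exact Subgroup.subset_closure (Set.mem_union_left _ (hyfY n))
    exact mem_pow_of_mem_closure hsY hxcl
  choose df hdf using hcl
  have hltdf : ∀ n, n < df n := by
    intro n
    by_contra hle
    push_neg at hle
    exact hyf n (Set.pow_subset_pow_right h1Y hle (hdf n))
  have hgmono : StrictMono (gseq df) :=
    strictMono_nat_of_lt_succ (fun k => by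
      have := hltdf (gseq df k)
      simp only [gseq]
      omega)
  -- union of the first N+1 witness sets
  have key : ∀ j : ℕ, ∃ W ∈ 𝒴, ∀ k ≤ j, Yf (gseq df k) ⊆ W := by
    intro j
    induction j with
    | zero =>
        refine ⟨Yf (gseq df 0), hYf _, ?_⟩
        intro k hk
        interval_cases k
        exact subset_rfl
    | succ j ih =>
        obtain ⟨W, hW, hWs⟩ := ih
        refine ⟨W ∪ Yf (gseq df (j + 1)), hunion _ hW _ (hYf _), ?_⟩
        intro k hk
        rcases Nat.lt_succ_iff_lt_or_eq.mp (Nat.lt_succ_of_le hk) with h | h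
        · exact (hWs k (Nat.lt_succ_iff.mp h)).trans Set.subset_union_left
        · rw [h]
          exact Set.subset_union_right
  obtain ⟨W, hW𝒴, hWsub⟩ := key N
  obtain ⟨Z₀, Z₁, hZ₀, _, hWZ, _⟩ := hcomm W hW𝒴 Ymax hYmax
  have hmem : ∀ k : Fin (N + 1), ∃ z ∈ (Z₀ : Finset G), ∃ a ∈ Ymax,
      z * a = yf (gseq df k.val) := by
    intro k
    have : yf (gseq df k.val) ∈ (Z₀ : Set G) * Ymax :=
      hWZ (hWsub k.val (Nat.lt_succ_iff.mp k.isLt) (hyfY _))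
    obtain ⟨z, hz, a, ha, hza⟩ := this
    exact ⟨z, hz, a, ha, hza⟩
  choose z hzZ a haY hmul using hmem
  -- pigeonhole
  have hcard : Z₀.card < (Finset.univ : Finset (Fin (N + 1))).card := by
    simpa using Nat.lt_succ_of_le hZ₀
  obtain ⟨j, -, k, -, hjk, hzeq⟩ :=
    Finset.exists_ne_map_eq_of_card_lt_of_maps_to hcard (fun k _ => hzZ k)
  -- symmetric core argument
  have key2 : ∀ j k : Fin (N + 1), (j : ℕ) < (k : ℕ) → z j = z k → False := by
    intro j k hlt hz
    set J := gseq df j.val with hJ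
    set K := gseq df k.val with hK
    have hyK : yf K = (yf J * (a j)⁻¹) * a k := by
      have h1 : z j * a j = yf J := hmul j
      have h2 : z k * a k = yf K := hmul k
      rw [← h1, ← h2, hz]
      group
    have hainv : (a j)⁻¹ ∈ Ymax := by
      have : a j ∈ Ymax⁻¹ := by rw [← hsY]; exact haY j
      exact Set.mem_inv.mp this
    have hpow : yf K ∈ Ymax ^ (df J + 2) := by
      rw [hyK, pow_succ, pow_succ]
      exact Set.mul_mem_mul (Set.mul_mem_mul (hdf J) hainv) (haY k)
    have hle : df J + 2 ≤ K := by
      have h1 : df J + 5 = gseq df (j.val + 1) := rfl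
      have h2 : gseq df (j.val + 1) ≤ K := hgmono.monotone hlt
      omega
    exact hyf K (Set.pow_subset_pow_right h1Y hle hpow)
  rcases (Fin.val_ne_of_ne hjk).lt_or_gt with h | h
  · exact key2 j k h hzeq
  · exact key2 k j h hzeq.symm
end
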